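/- arXiv:1802.05588 — 7 statements merged into one kernel-verified Lean document; each statement's English description precedes it below -/
import Mathlib

section
/- Let (V,g) be a 2n-dimensional hyperbolic quadratic space over a field k of characteristic 0, C(V,g) its Clifford algebra identified with End(S) for a 2^n-dimensional space S, Tr the corresponding trace, T the canonical anti-automorphism of C(V,g) extending the identity on V, and g_Λ the natural extension of g to the exterior algebra Λ^*(V). Then for all α, β ∈ Λ^*(V), 2^n · g_Λ(α, β) = Tr(Q(α)^T Q(β)); that is, the quantization map Q is a multiple of an isometry. -/
/-!
Diagonalise `g` by an orthogonal basis `b`; nondegeneracy makes every `g (b i) (b i)` nonzero.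
Both sides are bilinear in `α, β`, so it suffices to compare them on the basis
`b_s = ⋀_{i ∈ s} b i` of `Λ*(V)`. The quantization map sends `b_s` to the Clifford monomial `e_s`,
and `e_sᵀ e_s = ∏_{i ∈ s} g (b i) (b i)` is `g_Λ(b_s, b_s)` times the identity, whose trace is
`2 ^ n`. For `s ≠ t` the Gram matrix of `b_s, b_t` has a zero row or column, while `e_sᵀ e_t` is
a monomial in which some `b j` occurs exactly once. Conjugation by `b j` (if the monomial has even
degree) or by the volume element `e_univ` (odd degree; it anticommutes with every `b i` because
`dim V` is even) changes its sign, so its trace vanishes.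
-/

open CliffordAlgebra

lemma Finset.prod_orderEmbOfFin {α M : Type*} [LinearOrder α] [CommMonoid M] (s : Finset α)
    {m : ℕ} (h : s.card = m) (φ : α → M) : ∏ i, φ (s.orderEmbOfFin h i) = ∏ x ∈ s, φ x := by
  rw [← Finset.prod_coe_sort s φ]
  exact Fintype.prod_equiv (s.orderIsoOfFin h).toEquiv _ _ fun i => by simp

lemma Module.Basis.ExteriorAlgebra_eq_prod_ofFn {R M I : Type*} [CommRing R] [AddCommGroup M]
    [Module R M] [LinearOrder I] (b : Module.Basis I R M) {s : Finset I} {m : ℕ}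
    (h : s.card = m) :
    b.ExteriorAlgebra s =
      ((List.ofFn fun i => b (s.orderEmbOfFin h i)).map (ExteriorAlgebra.ι R)).prod := by
  rw [ExteriorAlgebra.basis_apply_ofCard b h, ExteriorAlgebra.ιMulti_family,
    ExteriorAlgebra.ιMulti_apply, List.map_ofFn]
  rfl

section Gram

variable {R M I : Type*} [CommRing R] [AddCommGroup M] [Module R M] {B : LinearMap.BilinForm R M}
  {b : I → M}

lemma det_gram_of_injective (hb : B.IsOrthoᵢ b) {m : ℕ} {u : Fin m → I} (hu : u.Injective) :
    (Matrix.of fun i j => B (b (u i)) (b (u j))).det = ∏ i, B (b (u i)) (b (u i)) := by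
  rw [← Matrix.det_diagonal]
  congr 1
  ext i j
  rcases eq_or_ne i j with rfl | hij
  · simp
  · simpa [Matrix.diagonal_apply_ne _ hij] using hb (hu.ne hij)

lemma det_gram_eq_zero_of_range_ne (hb : B.IsOrthoᵢ b) {m : ℕ} {u w : Fin m → I}
    (h : Set.range u ≠ Set.range w) : (Matrix.of fun i j => B (b (u i)) (b (w j))).det = 0 := by
  obtain ⟨x, hx⟩ := not_forall.mp (mt Set.ext h)
  by_cases hxu : x ∈ Set.range u
  · obtain ⟨i, rfl⟩ := hxu
    exact Matrix.det_eq_zero_of_row_eq_zero i fun j =>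
      hb fun hij => hx (iff_of_true ⟨i, rfl⟩ ⟨j, hij.symm⟩)
  · obtain ⟨j, rfl⟩ := (not_iff.mp hx).mp hxu
    exact Matrix.det_eq_zero_of_column_eq_zero j fun i => hb fun hij => hxu ⟨i, hij⟩

end Gram

section ExteriorGram

variable {R V I : Type*} [CommRing R] [AddCommGroup V] [Module R V] [LinearOrder I]
  {g : LinearMap.BilinForm R V} {G : LinearMap.BilinForm R (ExteriorAlgebra R V)}
  (hGdec : ∀ m : ℕ, ∀ u w : Fin m → V,
    G (((List.ofFn u).map (ExteriorAlgebra.ι R)).prod)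
      (((List.ofFn w).map (ExteriorAlgebra.ι R)).prod) =
      Matrix.det (Matrix.of fun i j => g (u i) (w j)))
  {b : Module.Basis I R V} (hb : g.IsOrthoᵢ b)
include hGdec hb

lemma apply_exteriorAlgebraBasis_self (s : Finset I) :
    G (b.ExteriorAlgebra s) (b.ExteriorAlgebra s) = ∏ i ∈ s, g (b i) (b i) := by
  rw [b.ExteriorAlgebra_eq_prod_ofFn rfl, hGdec,
    det_gram_of_injective hb (s.orderEmbOfFin rfl).injective,
    Finset.prod_orderEmbOfFin s rfl fun i => g (b i) (b i)]

lemma apply_exteriorAlgebraBasis_of_ne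
    (hGorth : ∀ p q : ℕ, p ≠ q → ∀ u : Fin p → V, ∀ w : Fin q → V,
      G (((List.ofFn u).map (ExteriorAlgebra.ι R)).prod)
        (((List.ofFn w).map (ExteriorAlgebra.ι R)).prod) = 0)
    {s t : Finset I} (hst : s ≠ t) : G (b.ExteriorAlgebra s) (b.ExteriorAlgebra t) = 0 := by
  rcases eq_or_ne s.card t.card with hc | hc
  · rw [b.ExteriorAlgebra_eq_prod_ofFn rfl, b.ExteriorAlgebra_eq_prod_ofFn hc.symm, hGdec]
    exact det_gram_eq_zero_of_range_ne hb (by simpa using hst)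
  · rw [b.ExteriorAlgebra_eq_prod_ofFn rfl, b.ExteriorAlgebra_eq_prod_ofFn rfl]
    exact hGorth _ _ hc _ _

end ExteriorGram

section Trace

variable {R A : Type*} [CommRing R] [IsAddTorsionFree R] [Ring A] [Algebra R A]

lemma map_eq_zero_of_isUnit_mul_eq_neg (f : A →ₗ[R] R) (hf : ∀ x y, f (x * y) = f (y * x))
    {u x : A} (hu : IsUnit u) (h : u * x = -(x * u)) : f x = 0 := by
  obtain ⟨u, rfl⟩ := hu
  refine self_eq_neg.mp ?_
  calc f x = f (↑u⁻¹ * (u * x)) := by rw [u.inv_mul_cancel_left]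
    _ = -f (x * u * ↑u⁻¹) := by rw [h, mul_neg, map_neg, hf]
    _ = -f x := by rw [u.mul_inv_cancel_right]

end Trace

section Monomial

variable {R V I : Type*} [CommRing R] [AddCommGroup V] [Module R V] {Q : QuadraticForm R V}

def cliffordMonomial (Q : QuadraticForm R V) (b : I → V) (l : List I) : CliffordAlgebra Q :=
  (l.map fun i => ι Q (b i)).prod

variable {b : I → V}

@[simp] lemma cliffordMonomial_nil : cliffordMonomial Q b [] = 1 := rfl

@[simp] lemma cliffordMonomial_cons (i : I) (l : List I) :
    cliffordMonomial Q b (i :: l) = ι Q (b i) * cliffordMonomial Q b l :=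
  List.prod_cons

@[simp] lemma cliffordMonomial_append (l₁ l₂ : List I) :
    cliffordMonomial Q b (l₁ ++ l₂) = cliffordMonomial Q b l₁ * cliffordMonomial Q b l₂ := by
  simp [cliffordMonomial]

lemma reverse_cliffordMonomial (l : List I) :
    reverse (cliffordMonomial Q b l) = cliffordMonomial Q b l.reverse := by
  induction l with
  | nil => simp
  | cons i l ih => simp [ih]

lemma cliffordMonomial_reverse_mul_self (l : List I) :
    cliffordMonomial Q b l.reverse * cliffordMonomial Q b l =
      algebraMap R _ (l.map fun i => Q (b i)).prod := by
  induction l with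
  | nil => simp
  | cons i l ih =>
    rw [List.reverse_cons, cliffordMonomial_append, cliffordMonomial_cons, cliffordMonomial_cons,
      cliffordMonomial_nil, mul_one, mul_assoc, ← mul_assoc (ι Q (b i)), ι_sq_scalar,
      ← Algebra.smul_def, mul_smul_comm, ih, Algebra.smul_def, ← map_mul, List.map_cons,
      List.prod_cons]

lemma isUnit_ι_of_isUnit {v : V} (h : IsUnit (Q v)) : IsUnit (ι Q v) := by
  have := h.invertible
  have := invertibleιOfInvertible Q v
  exact isUnit_of_invertible _

lemma isUnit_cliffordMonomial (hq : ∀ i, IsUnit (Q (b i))) (l : List I) :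
    IsUnit (cliffordMonomial Q b l) :=
  List.prod_isUnit <| by
    simp only [List.mem_map]
    rintro _ ⟨i, -, rfl⟩
    exact isUnit_ι_of_isUnit (hq i)

lemma map_reverse_cliffordMonomial_orderEmbOfFin_mul_self [LinearOrder I]
    (f : CliffordAlgebra Q →ₗ[R] R) (s : Finset I) :
    f (reverse (cliffordMonomial Q b (List.ofFn (s.orderEmbOfFin rfl))) *
        cliffordMonomial Q b (List.ofFn (s.orderEmbOfFin rfl))) = (∏ i ∈ s, Q (b i)) * f 1 := by
  rw [reverse_cliffordMonomial, cliffordMonomial_reverse_mul_self, Algebra.algebraMap_eq_smul_one,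
    map_smul, smul_eq_mul, List.map_ofFn, List.prod_ofFn]
  exact congrArg (· * f 1) (Finset.prod_orderEmbOfFin s rfl fun i => Q (b i))

lemma map_exteriorAlgebraBasis_eq_cliffordMonomial [LinearOrder I] {g : LinearMap.BilinForm R V}
    {b : Module.Basis I R V} (hb : g.IsOrthoᵢ b) {Φ : ExteriorAlgebra R V →ₗ[R] CliffordAlgebra Q}
    (hΦ : ∀ l : List V, l.Pairwise (fun v w => g v w = 0) →
      Φ ((l.map (ExteriorAlgebra.ι R)).prod) = (l.map (ι Q)).prod) (s : Finset I) :
    Φ (b.ExteriorAlgebra s) = cliffordMonomial Q b (List.ofFn (s.orderEmbOfFin rfl)) := by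
  rw [b.ExteriorAlgebra_eq_prod_ofFn rfl]
  simpa [cliffordMonomial, List.map_ofFn, Function.comp_def] using
    hΦ _ (List.pairwise_ofFn.mpr fun i j hij => hb ((s.orderEmbOfFin rfl).injective.ne hij.ne))

variable [DecidableEq I]

lemma ι_mul_cliffordMonomial (horth : Pairwise fun i j => Q.IsOrtho (b i) (b j)) (j : I)
    (l : List I) :
    ι Q (b j) * cliffordMonomial Q b l =
      (-1 : R) ^ (l.length + l.count j) • (cliffordMonomial Q b l * ι Q (b j)) := by
  induction l with
  | nil => simp
  | cons i l ih =>
    rcases eq_or_ne i j with rfl | hij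
    · rw [cliffordMonomial_cons, List.length_cons, List.count_cons_self,
        show l.length + 1 + (l.count i + 1) = l.length + l.count i + 2 by omega, pow_add,
        neg_one_sq, mul_one]
      conv_lhs => rw [ih, mul_smul_comm, ← mul_assoc]
    · rw [cliffordMonomial_cons, ← mul_assoc, ι_mul_ι_comm_of_isOrtho (horth hij.symm), neg_mul,
        mul_assoc, ih, mul_smul_comm, ← mul_assoc, List.length_cons, List.count_cons_of_ne hij,
        add_right_comm, pow_succ, mul_neg_one, neg_smul]

lemma cliffordMonomial_univ_mul [Fintype I] (horth : Pairwise fun i j => Q.IsOrtho (b i) (b j))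
    (hI : Even (Fintype.card I)) (l : List I) :
    cliffordMonomial Q b Finset.univ.toList * cliffordMonomial Q b l =
      (-1 : R) ^ l.length • (cliffordMonomial Q b l * cliffordMonomial Q b Finset.univ.toList) := by
  induction l with
  | nil => simp
  | cons i l ih =>
    have hi : ι Q (b i) * cliffordMonomial Q b Finset.univ.toList =
        -(cliffordMonomial Q b Finset.univ.toList * ι Q (b i)) := by
      rw [ι_mul_cliffordMonomial horth, Finset.length_toList, Finset.card_univ,
        List.count_eq_one_of_mem (Finset.nodup_toList _) (by simp), (hI.add_one).neg_one_pow,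
        neg_one_smul]
    rw [cliffordMonomial_cons, ← mul_assoc, ← neg_neg (_ * ι Q (b i)), ← hi, neg_mul, mul_assoc, ih]
    simp [pow_succ, mul_assoc]

end Monomial

section TraceClifford

variable {R V I : Type*} [CommRing R] [IsAddTorsionFree R] [AddCommGroup V] [Module R V]
  {Q : QuadraticForm R V} {b : I → V} [Fintype I] [DecidableEq I]
  (horth : Pairwise fun i j => Q.IsOrtho (b i) (b j)) (hq : ∀ i, IsUnit (Q (b i)))
  (hI : Even (Fintype.card I)) (f : CliffordAlgebra Q →ₗ[R] R)
  (hf : ∀ x y, f (x * y) = f (y * x))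
include horth hq hI hf

lemma map_cliffordMonomial_eq_zero_of_odd_count {l : List I} {j : I} (hj : Odd (l.count j)) :
    f (cliffordMonomial Q b l) = 0 := by
  rcases Nat.even_or_odd l.length with hl | hl
  · refine map_eq_zero_of_isUnit_mul_eq_neg f hf (isUnit_ι_of_isUnit (hq j)) ?_
    rw [ι_mul_cliffordMonomial horth, (hl.add_odd hj).neg_one_pow, neg_one_smul]
  · refine map_eq_zero_of_isUnit_mul_eq_neg f hf (isUnit_cliffordMonomial hq Finset.univ.toList) ?_
    rw [cliffordMonomial_univ_mul horth hI, hl.neg_one_pow, neg_one_smul]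

lemma map_reverse_cliffordMonomial_mul_eq_zero {m m' : ℕ} {σ : Fin m → I} {τ : Fin m' → I}
    (hσ : σ.Injective) (hτ : τ.Injective) (h : Set.range σ ≠ Set.range τ) :
    f (reverse (cliffordMonomial Q b (List.ofFn σ)) * cliffordMonomial Q b (List.ofFn τ)) = 0 := by
  obtain ⟨j, hj⟩ := not_forall.mp (mt Set.ext h)
  rw [reverse_cliffordMonomial, ← cliffordMonomial_append]
  refine map_cliffordMonomial_eq_zero_of_odd_count horth hq hI f hf (j := j) ?_
  rw [List.count_append, List.count_reverse, (List.nodup_ofFn.mpr hσ).count,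
    (List.nodup_ofFn.mpr hτ).count]
  by_cases hjσ : j ∈ Set.range σ <;> simp_all [List.mem_ofFn]

end TraceClifford

theorem stmt1_general {k V S : Type*} [Field k] [CharZero k]
    [AddCommGroup V] [Module k V] [FiniteDimensional k V]
    [AddCommGroup S] [Module k S] [FiniteDimensional k S] (n : ℕ)
    (g : LinearMap.BilinForm k V) (Q : QuadraticForm k V)
    (hsymm : ∀ v w, g v w = g w v)
    (hnd : g.Nondegenerate)
    (hdimV : Module.finrank k V = 2 * n)
    (hQ : ∀ v, Q v = g v v)
    (hdimS : Module.finrank k S = 2 ^ n)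
    -- the identification `C(V,g) ≅ End(S)`
    (e : CliffordAlgebra Q ≃ₐ[k] Module.End k S)
    -- the quantization map `Q : Λ*(V) → C(V,g)`, sending a product of
    -- pairwise orthogonal vectors in the exterior algebra to their Clifford product
    (Φ : ExteriorAlgebra k V →ₗ[k] CliffordAlgebra Q)
    (hΦ : ∀ l : List V, l.Pairwise (fun v w => g v w = 0) →
      Φ ((l.map (ExteriorAlgebra.ι k)).prod) = (l.map (ι Q)).prod)
    -- the natural extension `g_Λ` of `g` to the exterior algebra
    (G : LinearMap.BilinForm k (ExteriorAlgebra k V))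
    (hGdec : ∀ m : ℕ, ∀ u w : Fin m → V,
      G (((List.ofFn u).map (ExteriorAlgebra.ι k)).prod)
        (((List.ofFn w).map (ExteriorAlgebra.ι k)).prod) =
        Matrix.det (Matrix.of fun i j => g (u i) (w j)))
    (hGorth : ∀ p q : ℕ, p ≠ q → ∀ u : Fin p → V, ∀ w : Fin q → V,
      G (((List.ofFn u).map (ExteriorAlgebra.ι k)).prod)
        (((List.ofFn w).map (ExteriorAlgebra.ι k)).prod) = 0) :
    ∀ α β : ExteriorAlgebra k V,
      (2 : k) ^ n * G α β =
        LinearMap.trace k S (e (reverse (Φ α) * Φ β)) := by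
  classical
  obtain rfl : Q = g.toQuadraticMap := QuadraticMap.ext hQ
  let : Invertible (2 : k) := invertibleOfNonzero two_ne_zero
  obtain ⟨b, hb⟩ := LinearMap.BilinForm.exists_orthogonal_basis (B := g) ⟨hsymm⟩
  have hq : ∀ i, IsUnit (g.toQuadraticMap (b i)) := fun i =>
    (LinearMap.BilinForm.iIsOrtho.not_isOrtho_basis_self_of_nondegenerate hb hnd i).isUnit
  have horth : Pairwise fun i j => g.toQuadraticMap.IsOrtho (b i) (b j) := fun i j hij =>
    (LinearMap.BilinForm.toQuadraticMap_isOrtho ⟨hsymm⟩).mpr (hb hij)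
  have hN : Even (Fintype.card (Fin (Module.finrank k V))) := by simp [hdimV]
  set f := LinearMap.trace k S ∘ₗ e.toLinearMap
  have hf : ∀ x y, f (x * y) = f (y * x) := fun x y => by
    simpa [f] using LinearMap.trace_mul_comm k (e x) (e y)
  have hext : ((2 : k) ^ n) • G = ((LinearMap.mul k _).compl₁₂ (reverse ∘ₗ Φ) Φ).compr₂ f := by
    refine LinearMap.BilinForm.ext_basis b.ExteriorAlgebra fun s t => ?_
    simp only [LinearMap.smul_apply, LinearMap.compr₂_apply, LinearMap.compl₁₂_apply,
      LinearMap.comp_apply, LinearMap.mul_apply', smul_eq_mul,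
      map_exteriorAlgebraBasis_eq_cliffordMonomial hb hΦ]
    rcases eq_or_ne s t with rfl | hst
    · rw [apply_exteriorAlgebraBasis_self hGdec hb,
        map_reverse_cliffordMonomial_orderEmbOfFin_mul_self]
      simp [f, hdimS, mul_comm]
    · rw [apply_exteriorAlgebraBasis_of_ne hGdec hb hGorth hst, mul_zero,
        map_reverse_cliffordMonomial_mul_eq_zero horth hq hN f hf (s.orderEmbOfFin rfl).injective
          (t.orderEmbOfFin rfl).injective (by simpa using hst)]
  exact fun α β => LinearMap.congr_fun₂ hext α β

theorem stmt1 {k V S : Type*} [Field k] [CharZero k]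
    [AddCommGroup V] [Module k V] [FiniteDimensional k V]
    [AddCommGroup S] [Module k S] [FiniteDimensional k S] (n : ℕ)
    (g : LinearMap.BilinForm k V) (Q : QuadraticForm k V)
    (hsymm : ∀ v w, g v w = g w v)
    (hnd : g.Nondegenerate)
    (hdimV : Module.finrank k V = 2 * n)
    (hhyp : ∃ W : Submodule k V, Module.finrank k ↥W = n ∧
      ∀ x ∈ W, ∀ y ∈ W, g x y = 0)
    (hQ : ∀ v, Q v = g v v)
    (hdimS : Module.finrank k S = 2 ^ n)
    -- the identification `C(V,g) ≅ End(S)`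
    (e : CliffordAlgebra Q ≃ₐ[k] Module.End k S)
    -- the quantization map `Q : Λ*(V) → C(V,g)`, sending a product of
    -- pairwise orthogonal vectors in the exterior algebra to their Clifford product
    (Φ : ExteriorAlgebra k V →ₗ[k] CliffordAlgebra Q)
    (hΦ : ∀ l : List V, l.Pairwise (fun v w => g v w = 0) →
      Φ ((l.map (ExteriorAlgebra.ι k)).prod) = (l.map (ι Q)).prod)
    -- the natural extension `g_Λ` of `g` to the exterior algebra
    (G : LinearMap.BilinForm k (ExteriorAlgebra k V))
    (hGdec : ∀ m : ℕ, ∀ u w : Fin m → V,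
      G (((List.ofFn u).map (ExteriorAlgebra.ι k)).prod)
        (((List.ofFn w).map (ExteriorAlgebra.ι k)).prod) =
        Matrix.det (Matrix.of fun i j => g (u i) (w j)))
    (hGorth : ∀ p q : ℕ, p ≠ q → ∀ u : Fin p → V, ∀ w : Fin q → V,
      G (((List.ofFn u).map (ExteriorAlgebra.ι k)).prod)
        (((List.ofFn w).map (ExteriorAlgebra.ι k)).prod) = 0) :
    ∀ α β : ExteriorAlgebra k V,
      (2 : k) ^ n * G α β =
        LinearMap.trace k S (e (reverse (Φ α) * Φ β)) :=
  stmt1_general n g Q hsymm hnd hdimV hQ hdimS e Φ hΦ G hGdec hGorth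
end

section
/- With notation as above, an element c in the degree-k component C^k of the Clifford algebra satisfies B(c·φ, ψ) + B(φ, c·ψ) = 0 for all spinors φ, ψ if k ≡ 2 or 3 (mod 4); consequently every element of C^k with k ≡ 2, 3 (mod 4) lies in the Lie algebra aut(S,B) of endomorphisms of S leaving the spinor norm B invariant. -/
open CliffordAlgebra

/-- The degree-`m` component `C^m` of the Clifford algebra: the span of
products of `m` pairwise `g`-orthogonal vectors. -/
def cliffordGrade {k V : Type*} [Field k] [AddCommGroup V] [Module k V]
    (g : LinearMap.BilinForm k V) (Q : QuadraticForm k V) (m : ℕ) :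
    Submodule k (CliffordAlgebra Q) :=
  Submodule.span k
    {x | ∃ l : List V, l.length = m ∧ l.Pairwise (fun v w => g v w = 0) ∧
      x = (l.map (ι Q)).prod}

section aux

variable {k V : Type*} [Field k] [AddCommGroup V] [Module k V]
  (g : LinearMap.BilinForm k V) (Q : QuadraticForm k V)

lemma aux_anticomm (hQ : ∀ v, Q v = g v v) (v w : V) (h1 : g v w = 0) (h2 : g w v = 0) :
    ι Q w * ι Q v = - (ι Q v * ι Q w) := by
  have := ι_mul_ι_add_swap (Q := Q) v w
  have hp : QuadraticMap.polar Q v w = 0 := by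
    simp [QuadraticMap.polar, hQ, map_add, LinearMap.add_apply, h1, h2]
  rw [hp, map_zero] at this
  exact eq_neg_of_add_eq_zero_right this

lemma aux_mul_list (hQ : ∀ v, Q v = g v v) :
    ∀ (l : List V) (v : V), (∀ w ∈ l, g v w = 0 ∧ g w v = 0) →
      (l.map (ι Q)).prod * ι Q v = ((-1 : k) ^ l.length) • (ι Q v * (l.map (ι Q)).prod) := by
  intro l
  induction l with
  | nil => intro v _; simp
  | cons w t ih =>
    intro v hv
    have hw := hv w (by simp)
    have ht : ∀ x ∈ t, g v x = 0 ∧ g x v = 0 := fun x hx => hv x (by simp [hx])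
    simp only [List.map_cons, List.prod_cons, List.length_cons]
    rw [mul_assoc, ih v ht, mul_smul_comm, ← mul_assoc,
      aux_anticomm g Q hQ v w hw.1 hw.2, pow_succ]
    simp [mul_smul, mul_assoc]

end aux

lemma aux_tri_step (p : ℕ) : ((p+2)*(p+1))/2 = (p+1)*p/2 + (p+1) := by
  obtain ⟨t, ht⟩ : Even ((p+1)*p) := by rw [mul_comm]; exact Nat.even_mul_succ_self p
  have h2 : (p+2)*(p+1) = 2*(t+(p+1)) := by
    calc (p+2)*(p+1) = (p+1)*p + 2*(p+1) := by ring
    _ = 2*(t+(p+1)) := by rw [ht]; ring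
  rw [h2, ht]
  omega

lemma aux_odd (m : ℕ) (h : m % 4 = 2 ∨ m % 4 = 3) : Odd (m*(m-1)/2) := by
  rcases h with h | h
  · obtain ⟨q, rfl⟩ : ∃ q, m = 4*q+2 := ⟨m/4, by omega⟩
    have e : (4*q+2)-1 = 4*q+1 := by omega
    have h1 : (4*q+2)*((4*q+2)-1) = 2*((2*q+1)*(4*q+1)) := by rw [e]; ring
    rw [h1, Nat.mul_div_cancel_left _ (by norm_num)]
    exact ⟨4*q*q+3*q, by ring⟩
  · obtain ⟨q, rfl⟩ : ∃ q, m = 4*q+3 := ⟨m/4, by omega⟩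
    have e : (4*q+3)-1 = 4*q+2 := by omega
    have h1 : (4*q+3)*((4*q+3)-1) = 2*((4*q+3)*(2*q+1)) := by rw [e]; ring
    rw [h1, Nat.mul_div_cancel_left _ (by norm_num)]
    exact ⟨4*q*q+5*q+1, by ring⟩

lemma aux_tri (n : ℕ) : ((n+1)*n)/2 = n*(n-1)/2 + n := by
  cases n with
  | zero => simp
  | succ p => exact aux_tri_step p

lemma aux_key {k V S : Type*} [Field k] [AddCommGroup V] [Module k V]
    [AddCommGroup S] [Module k S]
    (g : LinearMap.BilinForm k V) (Q : QuadraticForm k V)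
    (hsymm : ∀ v w, g v w = g w v) (hQ : ∀ v, Q v = g v v)
    (ρ : CliffordAlgebra Q ≃ₐ[k] Module.End k S)
    (B : S →ₗ[k] S →ₗ[k] k)
    (hB : ∀ (v : V) (φ ψ : S), B (ρ (ι Q v) φ) ψ = B φ (ρ (ι Q v) ψ)) :
    ∀ l : List V, l.Pairwise (fun v w => g v w = 0) → ∀ φ ψ : S,
      B (ρ ((l.map (ι Q)).prod) φ) ψ =
        ((-1 : k) ^ (l.length * (l.length - 1) / 2)) * B φ (ρ ((l.map (ι Q)).prod) ψ) := by
  intro l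
  induction l with
  | nil => intro _ φ ψ; simp
  | cons v t ih =>
    intro hp φ ψ
    rw [List.pairwise_cons] at hp
    have ht : ∀ w ∈ t, g v w = 0 ∧ g w v = 0 := fun w hw =>
      ⟨hp.1 w hw, by rw [hsymm]; exact hp.1 w hw⟩
    simp only [List.map_cons, List.prod_cons, map_mul, Module.End.mul_apply, List.length_cons]
    rw [hB, ih hp.2, ← Module.End.mul_apply, ← map_mul,
      aux_mul_list g Q hQ t v ht, map_smul, LinearMap.smul_apply, map_smul,
      smul_eq_mul, Nat.add_sub_cancel, aux_tri, pow_add]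
    simp only [map_mul, Module.End.mul_apply]
    ring


theorem stmt4 {k V S : Type*} [Field k] [AddCommGroup V] [Module k V]
    [FiniteDimensional k V] [AddCommGroup S] [Module k S] [FiniteDimensional k S]
    (n : ℕ)
    (g : LinearMap.BilinForm k V) (Q : QuadraticForm k V)
    (hsymm : ∀ v w, g v w = g w v)
    (hnd : g.Nondegenerate)
    (hdimV : Module.finrank k V = 2 * n)
    (hhyp : ∃ W : Submodule k V, Module.finrank k ↥W = n ∧
      ∀ x ∈ W, ∀ y ∈ W, g x y = 0)
    (hQ : ∀ v, Q v = g v v)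
    (hdimS : Module.finrank k S = 2 ^ n)
    (ρ : CliffordAlgebra Q ≃ₐ[k] Module.End k S)
    (B : S →ₗ[k] S →ₗ[k] k) (hBne : B ≠ 0)
    (hB : ∀ (v : V) (φ ψ : S), B (ρ (ι Q v) φ) ψ = B φ (ρ (ι Q v) ψ)) :
    ∀ m : ℕ, (m % 4 = 2 ∨ m % 4 = 3) →
      ∀ c ∈ cliffordGrade g Q m,
        (∀ φ ψ : S, B (ρ c φ) ψ + B φ (ρ c ψ) = 0) ∧
        ρ c ∈ {T : Module.End k S | ∀ φ ψ : S, B (T φ) ψ + B φ (T ψ) = 0} := by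
  intro m hm c hc
  have hsign : ((-1 : k) ^ (m * (m - 1) / 2)) = -1 := Odd.neg_one_pow (aux_odd m hm)
  have key : ∀ φ ψ : S, B (ρ c φ) ψ + B φ (ρ c ψ) = 0 := by
    induction hc using Submodule.span_induction with
    | mem x hx =>
      obtain ⟨l, hlen, hpair, rfl⟩ := hx
      intro φ ψ
      rw [aux_key g Q hsymm hQ ρ B hB l hpair, hlen, hsign]
      ring
    | zero => intro φ ψ; simp
    | add x y _ _ hx hy =>
      intro φ ψ
      simp only [map_add, LinearMap.add_apply]
      linear_combination hx φ ψ + hy φ ψ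
    | smul a x _ hx =>
      intro φ ψ
      simp only [map_smul, LinearMap.smul_apply, smul_eq_mul]
      linear_combination a * hx φ ψ
  exact ⟨key, key⟩
end

section
/- With a polarisation V = I ⊕ E, pure spinor v_I, and spinor norm B as above, write e_K = e_{k_1}···e_{k_p} for an ordered subset K = {k_1,...,k_p} ⊆ {1,...,n}. Then B(e_K · v_I, e_J · v_I) ≠ 0 implies K ∩ J = ∅ and K ∪ J = {1,...,n} (i.e., J = K^c); moreover B(v_I, e_1 e_2 ··· e_n · v_I) ≠ 0. -/
/-!
Write `E a`, `I a` for the actions of `e_a`, `i_a` on spinors. The `E a` anticommute and square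
to zero, `I a E b + E b I a = δ_ab` and `I a v_I = 0`; and since `B` is `V`-symmetric,
`B(e_K v_I, e_J v_I) = B(v_I, e_{K^rev} e_J v_I)`. A repeated index makes the product vanish, and
a missing index `a` does too: `B(v_I, x) = B(I a E a v_I, x) = B(E a v_I, I a x)`, and `I a`
anticommutes past the `E b`, `b ≠ a`, in `x = e_L v_I` and kills `v_I`. For the second claim, the vectors `e_L v_I` span a subspace stable under all
`e_a` and `i_a`, hence under the whole Clifford algebra `≅ End S`, so they span `S`. If
`B(v_I, e_1 ⋯ e_n v_I)` were zero, all `B(v_I, e_L v_I)` would vanish (the surviving `L` are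
reorderings of `1, …, n`, whose products are `±e_1 ⋯ e_n`), so `B v_I = 0`, contradicting
nondegeneracy.
-/

open CliffordAlgebra

/-- The ordered product `e_{k₁} ⋯ e_{k_p}` in the Clifford algebra, for a
subset `K = {k₁ < ⋯ < k_p}` of `{1, …, n}`. -/
def prodE {k V : Type*} [Field k] [AddCommGroup V] [Module k V] {n : ℕ}
    (Q : QuadraticForm k V) (eB : Fin n → V) (P : Finset (Fin n)) :
    CliffordAlgebra Q :=
  ((P.sort (· ≤ ·)).map fun p => ι Q (eB p)).prod

namespace List

variable {A ι : Type*} [Ring A] {x : ι → A}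

theorem mul_prod_map_eq_zero_of_mem (hanti : ∀ a b, x a * x b = -(x b * x a))
    (hsq : ∀ a, x a * x a = 0) {a : ι} {L : List ι} (ha : a ∈ L) :
    x a * (L.map x).prod = 0 := by
  induction L with
  | nil => simp at ha
  | cons b L ih =>
    rw [map_cons, prod_cons, ← mul_assoc]
    obtain rfl | hab := eq_or_ne a b
    · rw [hsq, zero_mul]
    · rw [hanti, neg_mul, mul_assoc, ih ((mem_cons.mp ha).resolve_left hab), mul_zero, neg_zero]

theorem prod_map_eq_zero_of_not_nodup (hanti : ∀ a b, x a * x b = -(x b * x a))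
    (hsq : ∀ a, x a * x a = 0) {L : List ι} (hL : ¬ L.Nodup) : (L.map x).prod = 0 := by
  induction L with
  | nil => exact absurd nodup_nil hL
  | cons a L ih =>
    rw [nodup_cons, not_and_or, not_not] at hL
    rw [map_cons, prod_cons]
    rcases hL with ha | hL
    · exact mul_prod_map_eq_zero_of_mem hanti hsq ha
    · rw [ih hL, mul_zero]

theorem Perm.prod_map_eq_or_eq_neg (hanti : ∀ a b, x a * x b = -(x b * x a))
    {L L' : List ι} (h : L.Perm L') :
    (L.map x).prod = (L'.map x).prod ∨ (L.map x).prod = -(L'.map x).prod := by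
  induction h with
  | nil => exact .inl rfl
  | cons a _ ih => rcases ih with ih | ih <;> simp [ih]
  | swap a b L => right; simp only [map_cons, prod_cons, ← mul_assoc, hanti b a, neg_mul]
  | trans _ _ ih₁ ih₂ =>
    rcases ih₁ with ih₁ | ih₁ <;> rcases ih₂ with ih₂ | ih₂ <;> simp [ih₁, ih₂]

end List

theorem Module.End.mem_invtSubmodule_of_mem_adjoin {K M : Type*} [CommSemiring K]
    [AddCommMonoid M] [Module K M] {W : Submodule K M} {s : Set (Module.End K M)}
    (hs : ∀ f ∈ s, W ∈ f.invtSubmodule) {f : Module.End K M} (hf : f ∈ Algebra.adjoin K s) :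
    W ∈ f.invtSubmodule := by
  simp only [Module.End.mem_invtSubmodule_iff_forall_mem_of_mem] at hs ⊢
  induction hf using Algebra.adjoin_induction with
  | mem f hf => exact hs f hf
  | algebraMap r => intro w hw; simpa using W.smul_mem r hw
  | add f g _ _ hf hg => intro w hw; exact W.add_mem (hf w hw) (hg w hw)
  | mul f g _ _ hf hg => intro w hw; exact hf _ (hg w hw)

theorem Submodule.eq_top_of_forall_mem_invtSubmodule {K M : Type*} [Field K]
    [AddCommGroup M] [Module K M] {W : Submodule K M}
    (hW : ∀ f : Module.End K M, W ∈ f.invtSubmodule) (hne : W ≠ ⊥) : W = ⊤ := by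
  obtain ⟨w, hw, hw0⟩ := W.ne_bot_iff.mp hne
  obtain ⟨φ, hφ⟩ := Module.Projective.exists_dual_eq_one K hw0
  refine eq_top_iff.mpr fun ψ _ => ?_
  simpa [hφ] using hW (φ.smulRight ψ) hw

theorem CliffordAlgebra.adjoin_image_ι_eq_top {R M : Type*} [CommRing R] [AddCommGroup M]
    [Module R M] {Q : QuadraticForm R M} {s : Set M} (hs : Submodule.span R s = ⊤) :
    Algebra.adjoin R (ι Q '' s) = ⊤ := by
  refine eq_top_iff.mpr ((adjoin_range_ι (Q := Q)) ▸ Algebra.adjoin_le ?_)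
  rintro _ ⟨v, rfl⟩
  have hv : v ∈ Submodule.span R s := hs ▸ Submodule.mem_top
  exact Algebra.span_le_adjoin R _ (Submodule.map_span (ι Q) s ▸ Submodule.mem_map_of_mem hv)

section

variable {R M A F : Type*} [CommRing R] [AddCommGroup M] [Module R M] [Ring A] [Algebra R A]
  {Q : QuadraticForm R M} [FunLike F (CliffordAlgebra Q) A] [AlgHomClass F R (CliffordAlgebra Q) A]
  (φ : F)

theorem CliffordAlgebra.adjoin_image_map_ι_eq_top (hφ : Function.Surjective φ) {s : Set M}
    (hs : Submodule.span R s = ⊤) : Algebra.adjoin R ((fun v => φ (ι Q v)) '' s) = ⊤ := by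
  rw [← Set.image_image φ (ι Q), ← AlgHom.coe_coe φ, Algebra.adjoin_image,
    adjoin_image_ι_eq_top hs, Algebra.map_top, (AlgHom.range_eq_top _).mpr hφ]

theorem CliffordAlgebra.map_ι_mul_map_ι_add_swap (v w : M) :
    φ (ι Q v) * φ (ι Q w) + φ (ι Q w) * φ (ι Q v) =
      algebraMap R A (QuadraticMap.polar Q v w) := by
  rw [← map_mul φ, ← map_mul φ, ← map_add φ, ι_mul_ι_add_swap, AlgHomClass.commutes]

end

theorem map_prodE {k V A F : Type*} [Field k] [AddCommGroup V] [Module k V] [Ring A]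
    {n : ℕ} {Q : QuadraticForm k V} [FunLike F (CliffordAlgebra Q) A]
    [MonoidHomClass F (CliffordAlgebra Q) A] (φ : F) (eB : Fin n → V)
    (P : Finset (Fin n)) :
    φ (prodE Q eB P) = ((P.sort (· ≤ ·)).map fun a => φ (ι Q (eB a))).prod := by
  simp [prodE, map_list_prod, List.map_map, Function.comp_def]

theorem Finset.inter_eq_empty_and_union_eq_univ_of_nodup_sort_append {α : Type*} [Fintype α]
    [LinearOrder α] {K J : Finset α}
    (hnd : ((K.sort (· ≤ ·)).reverse ++ J.sort (· ≤ ·)).Nodup)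
    (hcov : ∀ a, a ∈ (K.sort (· ≤ ·)).reverse ++ J.sort (· ≤ ·)) :
    K ∩ J = ∅ ∧ K ∪ J = univ := by
  refine ⟨eq_empty_of_forall_notMem fun a ha => ?_, eq_univ_of_forall fun a => ?_⟩
  · rw [mem_inter] at ha
    exact List.disjoint_of_nodup_append hnd (by simpa using ha.1) (by simpa using ha.2)
  · simpa using hcov a

section

variable {K M ι : Type*} [CommRing K] [AddCommGroup M] [Module K M]
  {E I : ι → Module.End K M} {v : M}

theorem apply_prod_map_apply_eq_zero_of_notMem
    (hIE_ne : ∀ a b, a ≠ b → I a * E b = -(E b * I a)) (hIv : ∀ a, I a v = 0) {a : ι} :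
    ∀ {L : List ι}, a ∉ L → I a ((L.map E).prod v) = 0
  | [], _ => hIv a
  | b :: L, ha => by
    rw [List.mem_cons, not_or] at ha
    have h := congrArg (· ((L.map E).prod v)) (hIE_ne a b ha.1)
    simp only [Module.End.mul_apply, LinearMap.neg_apply,
      apply_prod_map_apply_eq_zero_of_notMem hIE_ne hIv ha.2, map_zero, neg_zero] at h
    simpa [Module.End.mul_apply] using h

theorem span_prod_map_apply_mem_invtSubmodule (b : ι) :
    Submodule.span K (Set.range fun L : List ι => (L.map E).prod v) ∈ (E b).invtSubmodule := by
  rw [Module.End.mem_invtSubmodule_iff_map_le, Submodule.map_span, Submodule.span_le,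
    ← Set.range_comp]
  rintro _ ⟨L, rfl⟩
  exact Submodule.subset_span ⟨b :: L, by simp [Module.End.mul_apply]⟩

theorem apply_prod_map_apply_mem_span
    (hIE_same : ∀ a, I a * E a + E a * I a = 1)
    (hIE_ne : ∀ a b, a ≠ b → I a * E b = -(E b * I a)) (hIv : ∀ a, I a v = 0) (a : ι) :
    ∀ L : List ι, I a ((L.map E).prod v) ∈
      Submodule.span K (Set.range fun L : List ι => (L.map E).prod v)
  | [] => by simp [hIv]
  | b :: L => by
    have ih := apply_prod_map_apply_mem_span hIE_same hIE_ne hIv a L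
    have hE := span_prod_map_apply_mem_invtSubmodule (K := K) (E := E) (v := v) b
    obtain rfl | hab := eq_or_ne a b
    · have h := congrArg (· ((L.map E).prod v)) (hIE_same a)
      simp only [Module.End.mul_apply, LinearMap.add_apply, Module.End.one_apply] at h
      rw [List.map_cons, List.prod_cons, Module.End.mul_apply, eq_sub_of_add_eq h]
      exact Submodule.sub_mem _ (Submodule.subset_span ⟨L, rfl⟩) (hE ih)
    · rw [List.map_cons, List.prod_cons, Module.End.mul_apply, ← Module.End.mul_apply (I a),
        hIE_ne a b hab, LinearMap.neg_apply, Module.End.mul_apply]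
      exact Submodule.neg_mem _ (hE ih)

variable {B : M →ₗ[K] M →ₗ[K] K}

theorem pairing_prod_map_apply (hBE : ∀ a φ ψ, B (E a φ) ψ = B φ (E a ψ)) :
    ∀ L J : List ι, B ((L.map E).prod v) ((J.map E).prod v) =
      B v (((L.reverse ++ J).map E).prod v)
  | [], J => by simp
  | a :: L, J => by
    have := pairing_prod_map_apply hBE L (a :: J)
    simp_all [Module.End.mul_apply]

theorem pairing_prod_map_apply_eq_zero_of_notMem
    (hIE_same : ∀ a, I a * E a + E a * I a = 1)
    (hIE_ne : ∀ a b, a ≠ b → I a * E b = -(E b * I a)) (hIv : ∀ a, I a v = 0)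
    (hBI : ∀ a φ ψ, B (I a φ) ψ = B φ (I a ψ)) {a : ι} {L : List ι} (ha : a ∉ L) :
    B v ((L.map E).prod v) = 0 := by
  have hvac : I a (E a v) = v := by
    simpa [hIv] using congrArg (· v) (hIE_same a)
  nth_rw 1 [← hvac]
  rw [hBI, apply_prod_map_apply_eq_zero_of_notMem hIE_ne hIv ha, map_zero]

theorem nodup_and_forall_mem_of_pairing_prod_map_apply_ne_zero
    (hEE : ∀ a b, E a * E b = -(E b * E a)) (hE_sq : ∀ a, E a * E a = 0)
    (hIE_same : ∀ a, I a * E a + E a * I a = 1)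
    (hIE_ne : ∀ a b, a ≠ b → I a * E b = -(E b * I a)) (hIv : ∀ a, I a v = 0)
    (hBI : ∀ a φ ψ, B (I a φ) ψ = B φ (I a ψ)) {L : List ι}
    (hL : B v ((L.map E).prod v) ≠ 0) : L.Nodup ∧ ∀ a, a ∈ L := by
  refine ⟨by_contra fun hnd => hL ?_, fun a => by_contra fun ha => hL ?_⟩
  · simp [List.prod_map_eq_zero_of_not_nodup hEE hE_sq hnd]
  · exact pairing_prod_map_apply_eq_zero_of_notMem hIE_same hIE_ne hIv hBI ha

end

section

variable {K M ι : Type*} [Field K] [AddCommGroup M] [Module K M]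
  {E I : ι → Module.End K M} {v : M}

theorem span_prod_map_apply_eq_top (hgen : Algebra.adjoin K (Set.range I ∪ Set.range E) = ⊤)
    (hIE_same : ∀ a, I a * E a + E a * I a = 1)
    (hIE_ne : ∀ a b, a ≠ b → I a * E b = -(E b * I a)) (hIv : ∀ a, I a v = 0)
    (hv_ne : v ≠ 0) :
    Submodule.span K (Set.range fun L : List ι => (L.map E).prod v) = ⊤ := by
  refine Submodule.eq_top_of_forall_mem_invtSubmodule (fun f =>
    Module.End.mem_invtSubmodule_of_mem_adjoin ?_ (hgen ▸ Algebra.mem_top)) ?_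
  · rintro _ (⟨a, rfl⟩ | ⟨b, rfl⟩)
    · rw [Module.End.mem_invtSubmodule_iff_map_le, Submodule.map_span, Submodule.span_le,
        ← Set.range_comp]
      rintro _ ⟨L, rfl⟩
      exact apply_prod_map_apply_mem_span hIE_same hIE_ne hIv a L
    · exact span_prod_map_apply_mem_invtSubmodule b
  · exact (Submodule.ne_bot_iff _).mpr ⟨v, Submodule.subset_span ⟨[], by simp⟩, hv_ne⟩

theorem pairing_prod_map_apply_ne_zero (hgen : Algebra.adjoin K (Set.range I ∪ Set.range E) = ⊤)
    (hEE : ∀ a b, E a * E b = -(E b * E a)) (hE_sq : ∀ a, E a * E a = 0)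
    (hIE_same : ∀ a, I a * E a + E a * I a = 1)
    (hIE_ne : ∀ a b, a ≠ b → I a * E b = -(E b * I a)) (hIv : ∀ a, I a v = 0)
    (hv_ne : v ≠ 0) {B : M →ₗ[K] M →ₗ[K] K}
    (hBI : ∀ a φ ψ, B (I a φ) ψ = B φ (I a ψ))
    (hBv : (∀ ψ, B v ψ = 0) → v = 0) {L : List ι} (hL : L.Nodup) (hcov : ∀ a, a ∈ L) :
    B v ((L.map E).prod v) ≠ 0 := by
  intro h
  have hall (L' : List ι) : B v ((L'.map E).prod v) = 0 := by
    by_contra h'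
    obtain ⟨hnd', hcov'⟩ :=
      nodup_and_forall_mem_of_pairing_prod_map_apply_ne_zero hEE hE_sq hIE_same hIE_ne hIv hBI h'
    have hperm : L'.Perm L :=
      (List.perm_ext_iff_of_nodup hnd' hL).mpr fun a => iff_of_true (hcov' a) (hcov a)
    rcases hperm.prod_map_eq_or_eq_neg hEE with e | e <;> simp [e, h] at h'
  refine hv_ne (hBv fun ψ => ?_)
  have hker : Submodule.span K (Set.range fun L : List ι => (L.map E).prod v) ≤
      LinearMap.ker (B v) := Submodule.span_le.mpr (Set.range_subset_iff.mpr hall)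
  rw [span_prod_map_apply_eq_top hgen hIE_same hIE_ne hIv hv_ne] at hker
  exact hker Submodule.mem_top

end

theorem stmt12_general {k V S : Type*} [Field k] [AddCommGroup V] [Module k V]
    [AddCommGroup S] [Module k S]
    (n : ℕ)
    (g : LinearMap.BilinForm k V) (Q : QuadraticForm k V)
    (h2 : (2 : k) ≠ 0)
    (hsymm : ∀ v w, g v w = g w v)
    (hQ : ∀ v, Q v = g v v)
    -- a polarisation with dual bases
    (iB eB : Fin n → V)
    (hee : ∀ a b, g (eB a) (eB b) = 0)
    (hei : ∀ a b, g (eB a) (iB b) = if a = b then (2 : k)⁻¹ else 0)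
    (hspan : Submodule.span k (Set.range iB ∪ Set.range eB) = ⊤)
    -- the spinor representation
    (ρ : CliffordAlgebra Q ≃ₐ[k] Module.End k S)
    -- a pure spinor annihilated by `I`
    (v0 : S) (hv0ne : v0 ≠ 0)
    (hv0 : ∀ a, ρ (ι Q (iB a)) v0 = 0)
    -- a nondegenerate spinor norm
    (B : S →ₗ[k] S →ₗ[k] k)
    (hB : ∀ (v : V) (φ ψ : S), B (ρ (ι Q v) φ) ψ = B φ (ρ (ι Q v) ψ))
    (hBndl : ∀ φ, (∀ ψ, B φ ψ = 0) → φ = 0) :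
    (∀ K J : Finset (Fin n),
      B (ρ (prodE Q eB K) v0) (ρ (prodE Q eB J) v0) ≠ 0 →
        K ∩ J = ∅ ∧ K ∪ J = Finset.univ) ∧
    B v0 (ρ (prodE Q eB Finset.univ) v0) ≠ 0 := by
  set E : Fin n → Module.End k S := fun a => ρ (ι Q (eB a))
  set I : Fin n → Module.End k S := fun a => ρ (ι Q (iB a))
  have hanti (v w : V) : ρ (ι Q v) * ρ (ι Q w) + ρ (ι Q w) * ρ (ι Q v) =
      algebraMap k _ (g v w + g w v) := by
    rw [map_ι_mul_map_ι_add_swap ρ, show Q = g.toQuadraticMap from QuadraticMap.ext hQ,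
      LinearMap.BilinMap.polar_toQuadraticMap]
  have hEE (a b : Fin n) : E a * E b = -(E b * E a) :=
    eq_neg_of_add_eq_zero_left (by simp [E, hanti, hee])
  have hE_sq (a : Fin n) : E a * E a = 0 := by simp [E, ← map_mul, hQ, hee]
  have hIE_same (a : Fin n) : I a * E a + E a * I a = 1 := by
    rw [hanti, hsymm (iB a), hei, if_pos rfl, ← two_mul, mul_inv_cancel₀ h2, map_one]
  have hIE_ne (a b : Fin n) (hab : a ≠ b) : I a * E b = -(E b * I a) := eq_neg_of_add_eq_zero_left
    (by rw [hanti, hsymm (iB a), hei, if_neg hab.symm, add_zero, map_zero])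
  have hgen : Algebra.adjoin k (Set.range I ∪ Set.range E) = ⊤ := by
    have h := adjoin_image_map_ι_eq_top ρ ρ.surjective hspan
    rwa [Set.image_union, ← Set.range_comp, ← Set.range_comp] at h
  have hBI (a : Fin n) := hB (iB a)
  simp only [map_prodE ρ]
  refine ⟨fun K J hKJ => ?_, ?_⟩
  · rw [pairing_prod_map_apply (fun a => hB (eB a))] at hKJ
    obtain ⟨hnd, hcov⟩ := nodup_and_forall_mem_of_pairing_prod_map_apply_ne_zero
      hEE hE_sq hIE_same hIE_ne hv0 hBI hKJ
    exact Finset.inter_eq_empty_and_union_eq_univ_of_nodup_sort_append hnd hcov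
  · exact pairing_prod_map_apply_ne_zero hgen hEE hE_sq hIE_same hIE_ne hv0 hv0ne hBI
      (hBndl v0) (Finset.sort_nodup _ _) (by simp)

theorem stmt12 {k V S : Type*} [Field k] [AddCommGroup V] [Module k V]
    [FiniteDimensional k V] [AddCommGroup S] [Module k S] [FiniteDimensional k S]
    (n : ℕ)
    (g : LinearMap.BilinForm k V) (Q : QuadraticForm k V)
    (h2 : (2 : k) ≠ 0)
    (hsymm : ∀ v w, g v w = g w v)
    (hdimV : Module.finrank k V = 2 * n)
    (hQ : ∀ v, Q v = g v v)
    -- a polarisation with dual bases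
    (iB eB : Fin n → V)
    (hii : ∀ a b, g (iB a) (iB b) = 0)
    (hee : ∀ a b, g (eB a) (eB b) = 0)
    (hei : ∀ a b, g (eB a) (iB b) = if a = b then (2 : k)⁻¹ else 0)
    (hspan : Submodule.span k (Set.range iB ∪ Set.range eB) = ⊤)
    -- the spinor representation
    (hdimS : Module.finrank k S = 2 ^ n)
    (ρ : CliffordAlgebra Q ≃ₐ[k] Module.End k S)
    -- a pure spinor annihilated by `I`
    (v0 : S) (hv0ne : v0 ≠ 0)
    (hv0 : ∀ a, ρ (ι Q (iB a)) v0 = 0)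
    -- a nondegenerate spinor norm
    (B : S →ₗ[k] S →ₗ[k] k) (hBne : B ≠ 0)
    (hB : ∀ (v : V) (φ ψ : S), B (ρ (ι Q v) φ) ψ = B φ (ρ (ι Q v) ψ))
    (hBndl : ∀ φ, (∀ ψ, B φ ψ = 0) → φ = 0)
    (hBndr : ∀ ψ, (∀ φ, B φ ψ = 0) → ψ = 0) :
    (∀ K J : Finset (Fin n),
      B (ρ (prodE Q eB K) v0) (ρ (prodE Q eB J) v0) ≠ 0 →
        K ∩ J = ∅ ∧ K ∪ J = Finset.univ) ∧
    B v0 (ρ (prodE Q eB Finset.univ) v0) ≠ 0 :=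
  stmt12_general n g Q h2 hsymm hQ iB eB hee hei hspan ρ v0 hv0ne hv0 B hB hBndl
end

section
/- Define φ: V → S by φ(v) = v·φ and φ*: S → V by φ*(ψ) = Σ_i g(e_i,e_i) B(φ, e_i·ψ) e_i for an orthonormal basis {e_i} of V. Then φ and φ* are adjoint: B(φ(v), ψ) = g(v, φ*(ψ)) for all v ∈ V, ψ ∈ S. Moreover, for spinors φ, ψ, the endomorphism (−1)^{n(n−1)/2} ψ* ∘ φ − φ* ∘ ψ of V is antisymmetric with respect to g, and (−1)^{n(n−1)/2} ψ* ∘ φ + φ* ∘ ψ is symmetric with respect to g. -/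
/-!
The vector `φ*(ψ)` is the `g`-dual of the linear form `v ↦ B(φ, v·ψ)`, written in an orthonormal
basis; this gives the adjunction. Pairing either endomorphism with `w` and using that adjunction turns
both sides into values of `B` on `w·v·…` and `v·w·…`. For the antisymmetric combination the sum
only involves the anticommutator `vw + wv`, a scalar in the Clifford algebra, and then vanishes by
the symmetry of `B`; for the symmetric one, the symmetry of `B` together with the invariance
`B(v·φ, ψ) = B(φ, v·ψ)` swaps the two terms.
-/

open CliffordAlgebra

namespace LinearMap.BilinForm

variable {k V ι : Type*} [CommRing k] [AddCommGroup V] [Module k V] [Fintype ι]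

theorem apply_sum_smul_of_orthonormal (g : LinearMap.BilinForm k V) (b : Module.Basis ι k V)
    (horth : ∀ i j, i ≠ j → g (b i) (b j) = 0) (hunit : ∀ i, g (b i) (b i) * g (b i) (b i) = 1)
    (f : V →ₗ[k] k) (v : V) :
    g v (∑ i, (g (b i) (b i) * f (b i)) • b i) = f v := by
  suffices g.flip (∑ i, (g (b i) (b i) * f (b i)) • b i) = f from DFunLike.congr_fun this v
  refine b.ext fun j => ?_
  rw [flip_apply, map_sum, Finset.sum_eq_single j (fun i _ hij => by simp [horth j i hij.symm])
    (by simp), map_smul, smul_eq_mul, mul_right_comm, hunit, one_mul]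

end LinearMap.BilinForm

namespace CliffordAlgebra

variable {k V S : Type*} [CommRing k] [AddCommGroup V] [Module k V] [AddCommGroup S] [Module k S]
  {Q : QuadraticForm k V}

theorem map_ι_mul_ι_add_swap_apply (ρ : CliffordAlgebra Q →ₐ[k] Module.End k S) (v w : V)
    (ψ : S) :
    ρ (ι Q v) (ρ (ι Q w) ψ) + ρ (ι Q w) (ρ (ι Q v) ψ) = QuadraticMap.polar Q v w • ψ := by
  simpa using congr($(ρ.congr_arg (ι_mul_ι_add_swap v w)) ψ)

variable (g : LinearMap.BilinForm k V) (ρ : CliffordAlgebra Q →ₐ[k] Module.End k S)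
  (B : S →ₗ[k] S →ₗ[k] k) {ε : k} (star : S → S → V)

theorem spinorAdjoint_sub_skew (hsymm : ∀ v w, g v w = g w v)
    (hBsymm : ∀ φ ψ, B φ ψ = ε * B ψ φ) (hstar : ∀ φ ψ u, g u (star φ ψ) = B φ (ρ (ι Q u) ψ))
    (φ ψ : S) (v w : V) :
    g (ε • star ψ (ρ (ι Q v) φ) - star φ (ρ (ι Q v) ψ)) w
      + g v (ε • star ψ (ρ (ι Q w) φ) - star φ (ρ (ι Q w) ψ)) = 0 := by
  have hanti : ∀ χ θ : S, B χ (ρ (ι Q w) (ρ (ι Q v) θ)) + B χ (ρ (ι Q v) (ρ (ι Q w) θ))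
      = QuadraticMap.polar Q w v * B χ θ := fun χ θ => by
    rw [← map_add, map_ι_mul_ι_add_swap_apply, map_smul, smul_eq_mul]
  rw [hsymm _ w]
  simp only [map_sub, map_smul, smul_eq_mul, hstar]
  linear_combination ε * hanti ψ φ - hanti φ ψ - QuadraticMap.polar Q w v * hBsymm φ ψ

theorem spinorAdjoint_add_symm (hsymm : ∀ v w, g v w = g w v)
    (hB : ∀ v φ ψ, B (ρ (ι Q v) φ) ψ = B φ (ρ (ι Q v) ψ)) (hBsymm : ∀ φ ψ, B φ ψ = ε * B ψ φ)
    (hstar : ∀ φ ψ u, g u (star φ ψ) = B φ (ρ (ι Q u) ψ)) (φ ψ : S) (v w : V) :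
    g (ε • star ψ (ρ (ι Q v) φ) + star φ (ρ (ι Q v) ψ)) w
      = g v (ε • star ψ (ρ (ι Q w) φ) + star φ (ρ (ι Q w) ψ)) := by
  have hswap : ∀ v w : V, ε * B ψ (ρ (ι Q w) (ρ (ι Q v) φ)) = B φ (ρ (ι Q v) (ρ (ι Q w) ψ)) :=
    fun v w => by rw [← hBsymm, hB, hB]
  rw [hsymm _ w]
  simp only [map_add, map_smul, smul_eq_mul, hstar]
  linear_combination hswap v w - hswap w v

end CliffordAlgebra

theorem stmt14_general {k V S : Type*} [Field k] [AddCommGroup V] [Module k V]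
    [AddCommGroup S] [Module k S]
    (n : ℕ)
    (g : LinearMap.BilinForm k V) (Q : QuadraticForm k V)
    (hsymm : ∀ v w, g v w = g w v)
    -- an orthonormal basis of `V`
    (b : Module.Basis (Fin (2 * n)) k V)
    (horth : ∀ i j, i ≠ j → g (b i) (b j) = 0)
    (hunit : ∀ i, g (b i) (b i) = 1 ∨ g (b i) (b i) = -1)
    -- the spinor representation
    (ρ : CliffordAlgebra Q ≃ₐ[k] Module.End k S)
    -- a nonzero spinor norm with its symmetry `B(φ,ψ) = (−1)^{n(n−1)/2} B(ψ,φ)`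
    (B : S →ₗ[k] S →ₗ[k] k)
    (hB : ∀ (v : V) (φ ψ : S), B (ρ (ι Q v) φ) ψ = B φ (ρ (ι Q v) ψ))
    (hBsymm : ∀ φ ψ : S, B φ ψ = (-1 : k) ^ (n * (n - 1) / 2) * B ψ φ) :
    letI star : S → S → V := fun φ ψ =>
      ∑ i, (g (b i) (b i) * B φ (ρ (ι Q (b i)) ψ)) • b i
    -- `φ : V → S, v ↦ v·φ` and `φ* : S → V` are adjoint
    (∀ (φ : S) (v : V) (ψ : S), B (ρ (ι Q v) φ) ψ = g v (star φ ψ)) ∧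
    -- `(−1)^{n(n−1)/2} ψ*∘φ − φ*∘ψ` is antisymmetric with respect to `g`
    (∀ φ ψ : S, ∀ v w : V,
      g ((-1 : k) ^ (n * (n - 1) / 2) • star ψ (ρ (ι Q v) φ)
          - star φ (ρ (ι Q v) ψ)) w
        + g v ((-1 : k) ^ (n * (n - 1) / 2) • star ψ (ρ (ι Q w) φ)
          - star φ (ρ (ι Q w) ψ)) = 0) ∧
    -- `(−1)^{n(n−1)/2} ψ*∘φ + φ*∘ψ` is symmetric with respect to `g`
    (∀ φ ψ : S, ∀ v w : V,
      g ((-1 : k) ^ (n * (n - 1) / 2) • star ψ (ρ (ι Q v) φ)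
          + star φ (ρ (ι Q v) ψ)) w
        = g v ((-1 : k) ^ (n * (n - 1) / 2) • star ψ (ρ (ι Q w) φ)
          + star φ (ρ (ι Q w) ψ))) := by
  set star : S → S → V := fun φ ψ => ∑ i, (g (b i) (b i) * B φ (ρ (ι Q (b i)) ψ)) • b i
  have hunit_sq : ∀ i, g (b i) (b i) * g (b i) (b i) = 1 := fun i => by
    rcases hunit i with h | h <;> simp [h]
  have hstar : ∀ φ ψ u, g u (star φ ψ) = B φ (ρ (ι Q u) ψ) := fun φ ψ u =>
    LinearMap.BilinForm.apply_sum_smul_of_orthonormal g b horth hunit_sq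
      (B φ ∘ₗ LinearMap.applyₗ ψ ∘ₗ ρ.toLinearMap ∘ₗ ι Q) u
  exact ⟨fun φ v ψ => (hB v φ ψ).trans (hstar φ ψ v).symm,
    spinorAdjoint_sub_skew g ρ.toAlgHom B star hsymm hBsymm hstar,
    spinorAdjoint_add_symm g ρ.toAlgHom B star hsymm hB hBsymm hstar⟩

theorem stmt14 {k V S : Type*} [Field k] [AddCommGroup V] [Module k V]
    [FiniteDimensional k V] [AddCommGroup S] [Module k S] [FiniteDimensional k S]
    (n : ℕ)
    (g : LinearMap.BilinForm k V) (Q : QuadraticForm k V)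
    (h2 : (2 : k) ≠ 0)
    (hsymm : ∀ v w, g v w = g w v)
    (hQ : ∀ v, Q v = g v v)
    -- an orthonormal basis of `V`
    (b : Module.Basis (Fin (2 * n)) k V)
    (horth : ∀ i j, i ≠ j → g (b i) (b j) = 0)
    (hunit : ∀ i, g (b i) (b i) = 1 ∨ g (b i) (b i) = -1)
    -- the spinor representation
    (hdimS : Module.finrank k S = 2 ^ n)
    (ρ : CliffordAlgebra Q ≃ₐ[k] Module.End k S)
    -- a nonzero spinor norm with its symmetry `B(φ,ψ) = (−1)^{n(n−1)/2} B(ψ,φ)`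
    (B : S →ₗ[k] S →ₗ[k] k) (hBne : B ≠ 0)
    (hB : ∀ (v : V) (φ ψ : S), B (ρ (ι Q v) φ) ψ = B φ (ρ (ι Q v) ψ))
    (hBsymm : ∀ φ ψ : S, B φ ψ = (-1 : k) ^ (n * (n - 1) / 2) * B ψ φ) :
    letI star : S → S → V := fun φ ψ =>
      ∑ i, (g (b i) (b i) * B φ (ρ (ι Q (b i)) ψ)) • b i
    -- `φ : V → S, v ↦ v·φ` and `φ* : S → V` are adjoint
    (∀ (φ : S) (v : V) (ψ : S), B (ρ (ι Q v) φ) ψ = g v (star φ ψ)) ∧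
    -- `(−1)^{n(n−1)/2} ψ*∘φ − φ*∘ψ` is antisymmetric with respect to `g`
    (∀ φ ψ : S, ∀ v w : V,
      g ((-1 : k) ^ (n * (n - 1) / 2) • star ψ (ρ (ι Q v) φ)
          - star φ (ρ (ι Q v) ψ)) w
        + g v ((-1 : k) ^ (n * (n - 1) / 2) • star ψ (ρ (ι Q w) φ)
          - star φ (ρ (ι Q w) ψ)) = 0) ∧
    -- `(−1)^{n(n−1)/2} ψ*∘φ + φ*∘ψ` is symmetric with respect to `g`
    (∀ φ ψ : S, ∀ v w : V,
      g ((-1 : k) ^ (n * (n - 1) / 2) • star ψ (ρ (ι Q v) φ)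
          + star φ (ρ (ι Q v) ψ)) w
        = g v ((-1 : k) ^ (n * (n - 1) / 2) • star ψ (ρ (ι Q w) φ)
          + star φ (ρ (ι Q w) ψ))) :=
  stmt14_general n g Q hsymm b horth hunit ρ B hB hBsymm
end

section
/- With φ, φ* as above and L̃₂(φ,ψ) := 2^{n−1} π₂(τ(φ⊗ψ)) where τ(φ⊗ψ)(ξ) = B(φ,ξ)ψ, one has for all spinors φ, ψ and all v ∈ V: (i) 2[L̃₂(φ,ψ), v] = (−1)^{n(n−1)/2} ψ*∘φ(v) − φ*∘ψ(v), and (ii) 2 B(φ,ψ) v = (−1)^{n(n−1)/2} ψ*∘φ(v) + φ*∘ψ(v), the bracket and action taken in the Clifford algebra. -/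
/-!
Write `eᵢ = b i`, `εᵢ = g eᵢ eᵢ` and `F x = B φ (ρ x ψ)`. Invariance and the symmetry of `B` give
`(-1)^(n(n-1)/2) B ψ (eᵢ v φ) = F (v eᵢ)`, so both right-hand sides are `∑ᵢ εᵢ F (v eᵢ ± eᵢ v) eᵢ`.
For (ii) the anticommutator `v eᵢ + eᵢ v` is the scalar `2 g v eᵢ`, and `∑ᵢ εᵢ g v eᵢ • eᵢ = v`.
For (i), `[eᵢ eⱼ, v] = 2 g eⱼ v • eᵢ - 2 g eᵢ v • eⱼ`; as `F (eⱼ eᵢ)` is antisymmetric in `i ≠ j`,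
the sum over `i < j` becomes a sum over all pairs, and its inner sums reassemble `v` inside `F`.
-/

open CliffordAlgebra

namespace LinearMap.BilinForm.iIsOrtho

variable {k V W κ : Type*} [CommRing k] [AddCommGroup V] [Module k V] [AddCommGroup W] [Module k W]
  [Fintype κ] {g : LinearMap.BilinForm k V} {b : Module.Basis κ k V}

theorem apply_basis (hb : g.iIsOrtho b) (v : V) (i : κ) :
    g v (b i) = b.repr v i * g (b i) (b i) := by
  conv_lhs => rw [← b.sum_repr v]
  rw [map_sum, LinearMap.sum_apply, Finset.sum_eq_single i]
  · simp
  · intro j _ hji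
    simp [hb hji]
  · simp

theorem sum_smul_apply_basis (hb : g.iIsOrtho b) (hsq : ∀ i, g (b i) (b i) * g (b i) (b i) = 1)
    (f : V →ₗ[k] W) (v : V) : ∑ i, (g (b i) (b i) * g v (b i)) • f (b i) = f v := by
  conv_rhs => rw [← b.sum_repr v]
  simp only [map_sum, map_smul]
  refine Finset.sum_congr rfl fun i _ => ?_
  rw [hb.apply_basis v i, mul_left_comm, hsq, mul_one]

end LinearMap.BilinForm.iIsOrtho

theorem Finset.sum_filter_lt_add_sum_diag {κ M : Type*} [Fintype κ] [LinearOrder κ]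
    [AddCommMonoid M] (f : κ → κ → M) :
    ∑ p ∈ univ.filter (fun p : κ × κ => p.1 < p.2), (f p.1 p.2 + f p.2 p.1) + ∑ i, f i i =
      ∑ i, ∑ j, f i j := by
  have hswap : ∑ p ∈ univ.filter (fun p : κ × κ => p.1 < p.2), f p.2 p.1 =
      ∑ p ∈ univ.filter (fun p : κ × κ => p.2 < p.1), f p.1 p.2 :=
    Finset.sum_nbij' Prod.swap Prod.swap (by simp) (by simp) (by simp) (by simp) (by simp)
  have hdiag : ∑ i, f i i = ∑ p ∈ univ.filter (fun p : κ × κ => p.1 = p.2), f p.1 p.2 := by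
    rw [Finset.sum_filter, Fintype.sum_prod_type]
    simp
  rw [Finset.sum_add_distrib, hswap, hdiag, ← Fintype.sum_prod_type', Finset.sum_filter,
    Finset.sum_filter, Finset.sum_filter, ← Finset.sum_add_distrib, ← Finset.sum_add_distrib]
  refine Finset.sum_congr rfl fun p _ => ?_
  rcases lt_trichotomy p.1 p.2 with h | h | h
  · simp [h, h.ne, h.not_gt]
  · simp [h]
  · simp [h, h.ne', h.not_gt]

section Commutator

attribute [local instance] LieRing.ofAssociativeRing

namespace CliffordAlgebra

variable {R M : Type*} [CommRing R] [AddCommGroup M] [Module R M] {Q : QuadraticForm R M}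

theorem lie_ι_mul_ι_ι (u w v : M) :
    ⁅ι Q u * ι Q w, ι Q v⁆ =
      QuadraticMap.polar Q w v • ι Q u - QuadraticMap.polar Q u v • ι Q w := by
  rw [Ring.lie_def, mul_assoc, ι_mul_ι_comm w v, mul_sub, ← mul_assoc, ι_mul_ι_comm u v, sub_mul,
    ← Algebra.commutes, Algebra.smul_def, Algebra.smul_def, mul_assoc]
  abel

end CliffordAlgebra

section Bivector

variable {k V κ : Type*} [CommRing k] [AddCommGroup V] [Module k V] [Fintype κ] [LinearOrder κ]
  {g : LinearMap.BilinForm k V} {b : Module.Basis κ k V} {Q : QuadraticForm k V}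

theorem lie_sum_bivector_ι (hpolar : ∀ v w, QuadraticMap.polar Q v w = 2 * g v w)
    (hb : g.iIsOrtho b) (hsq : ∀ i, g (b i) (b i) * g (b i) (b i) = 1)
    (F : CliffordAlgebra Q →ₗ[k] k) (v : V) :
    ⁅∑ p ∈ Finset.univ.filter (fun p : κ × κ => p.1 < p.2),
        (g (b p.1) (b p.1) * g (b p.2) (b p.2) * F (ι Q (b p.2) * ι Q (b p.1))) •
          (ι Q (b p.1) * ι Q (b p.2)), ι Q v⁆ =
      ∑ i, (g (b i) (b i) * F ⁅ι Q v, ι Q (b i)⁆) • ι Q (b i) := by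
  set c : κ → κ → k := fun i j => g (b i) (b i) * g (b j) (b j) * F (ι Q (b j) * ι Q (b i))
  set h : κ → κ → CliffordAlgebra Q := fun i j =>
    c i j • (g v (b j) • ι Q (b i) - g v (b i) • ι Q (b j))
  have hanti : ∀ i j, i ≠ j → ι Q (b i) * ι Q (b j) = -(ι Q (b j) * ι Q (b i)) := by
    intro i j hij
    rw [ι_mul_ι_comm, hpolar, hb hij, mul_zero, map_zero, zero_sub]
  have hlie : ∀ i j, i ≠ j → ⁅c i j • (ι Q (b i) * ι Q (b j)), ι Q v⁆ = h i j + h j i := by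
    intro i j hij
    have hc : c j i = - c i j := by
      simp only [c, hanti i j hij, map_neg]
      ring
    simp only [h, smul_lie, lie_ι_mul_ι_ι, QuadraticMap.polar_comm _ _ v, hpolar, hc]
    module
  have hright : ∀ i, ∑ j, c i j * g v (b j) = g (b i) (b i) * F (ι Q v * ι Q (b i)) := by
    intro i
    have := hb.sum_smul_apply_basis hsq (F ∘ₗ LinearMap.mulRight k (ι Q (b i)) ∘ₗ ι Q) v
    simp only [LinearMap.comp_apply, LinearMap.mulRight_apply, smul_eq_mul] at this
    rw [← this, Finset.mul_sum]
    exact Finset.sum_congr rfl fun j _ => by ring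
  have hleft : ∀ j, ∑ i, c i j * g v (b i) = g (b j) (b j) * F (ι Q (b j) * ι Q v) := by
    intro j
    have := hb.sum_smul_apply_basis hsq (F ∘ₗ LinearMap.mulLeft k (ι Q (b j)) ∘ₗ ι Q) v
    simp only [LinearMap.comp_apply, LinearMap.mulLeft_apply, smul_eq_mul] at this
    rw [← this, Finset.mul_sum]
    exact Finset.sum_congr rfl fun i _ => by ring
  calc _ = ∑ p ∈ Finset.univ.filter (fun p : κ × κ => p.1 < p.2), (h p.1 p.2 + h p.2 p.1) := by
        rw [sum_lie]
        exact Finset.sum_congr rfl fun p hp => hlie _ _ (Finset.mem_filter.1 hp).2.ne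
    _ = ∑ i, ∑ j, h i j := by
        rw [← Finset.sum_filter_lt_add_sum_diag]
        simp [h]
    _ = ∑ i, (∑ j, c i j * g v (b j)) • ι Q (b i) - ∑ j, (∑ i, c i j * g v (b i)) • ι Q (b j) := by
        simp only [h, smul_sub, smul_smul, Finset.sum_sub_distrib, Finset.sum_smul]
        rw [Finset.sum_comm (f := fun i j => (c i j * g v (b i)) • ι Q (b j))]
    _ = _ := by
        simp only [hright, hleft, Ring.lie_def, map_sub, mul_sub, sub_smul, Finset.sum_sub_distrib]

end Bivector

section Spinor

variable {k V S F : Type*} [CommRing k] [AddCommGroup V] [Module k V] [AddCommGroup S]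
  [Module k S] {Q : QuadraticForm k V} [FunLike F (CliffordAlgebra Q) (Module.End k S)]
  [AlgHomClass F k (CliffordAlgebra Q) (Module.End k S)] {ρ : F} {B : S →ₗ[k] S →ₗ[k] k} {s : k}

theorem sign_mul_apply_ι_apply_ι (hB : ∀ (v : V) (φ ψ : S), B (ρ (ι Q v) φ) ψ = B φ (ρ (ι Q v) ψ))
    (hBsymm : ∀ φ ψ : S, B φ ψ = s * B ψ φ) (φ ψ : S) (v w : V) :
    s * B ψ (ρ (ι Q w) (ρ (ι Q v) φ)) = B φ (ρ (ι Q v * ι Q w) ψ) := by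
  rw [← hBsymm, hB, hB, map_mul, Module.End.mul_apply]

theorem sign_mul_add_apply_ι_apply_ι
    (hB : ∀ (v : V) (φ ψ : S), B (ρ (ι Q v) φ) ψ = B φ (ρ (ι Q v) ψ))
    (hBsymm : ∀ φ ψ : S, B φ ψ = s * B ψ φ) (φ ψ : S) (v w : V) :
    s * B ψ (ρ (ι Q w) (ρ (ι Q v) φ)) + B φ (ρ (ι Q w) (ρ (ι Q v) ψ)) =
      QuadraticMap.polar Q v w * B φ ψ := by
  rw [sign_mul_apply_ι_apply_ι hB hBsymm, ← Module.End.mul_apply, ← map_mul ρ, ← map_add (B φ),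
    ← LinearMap.add_apply, ← map_add ρ, ι_mul_ι_add_swap, AlgHomClass.commutes,
    Module.algebraMap_end_apply, map_smul, smul_eq_mul]

theorem sign_mul_sub_apply_ι_apply_ι
    (hB : ∀ (v : V) (φ ψ : S), B (ρ (ι Q v) φ) ψ = B φ (ρ (ι Q v) ψ))
    (hBsymm : ∀ φ ψ : S, B φ ψ = s * B ψ φ) (φ ψ : S) (v w : V) :
    s * B ψ (ρ (ι Q w) (ρ (ι Q v) φ)) - B φ (ρ (ι Q w) (ρ (ι Q v) ψ)) =
      B φ (ρ ⁅ι Q v, ι Q w⁆ ψ) := by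
  rw [sign_mul_apply_ι_apply_ι hB hBsymm, ← Module.End.mul_apply, ← map_mul ρ, ← map_sub (B φ),
    ← LinearMap.sub_apply, ← map_sub ρ, Ring.lie_def]

end Spinor

end Commutator

theorem stmt15_general {k V S : Type*} [Field k] [AddCommGroup V] [Module k V]
    [AddCommGroup S] [Module k S]
    (n : ℕ)
    (g : LinearMap.BilinForm k V) (Q : QuadraticForm k V)
    (h2 : (2 : k) ≠ 0)
    (hsymm : ∀ v w, g v w = g w v)
    (hQ : ∀ v, Q v = g v v)
    -- an orthonormal basis of `V`
    (b : Module.Basis (Fin (2 * n)) k V)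
    (horth : ∀ i j, i ≠ j → g (b i) (b j) = 0)
    (hunit : ∀ i, g (b i) (b i) = 1 ∨ g (b i) (b i) = -1)
    -- the spinor representation
    (ρ : CliffordAlgebra Q ≃ₐ[k] Module.End k S)
    -- a nonzero spinor norm with its symmetry
    (B : S →ₗ[k] S →ₗ[k] k)
    (hB : ∀ (v : V) (φ ψ : S), B (ρ (ι Q v) φ) ψ = B φ (ρ (ι Q v) ψ))
    (hBsymm : ∀ φ ψ : S, B φ ψ = (-1 : k) ^ (n * (n - 1) / 2) * B ψ φ) :
    letI star : S → S → V := fun φ ψ =>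
      ∑ i, (g (b i) (b i) * B φ (ρ (ι Q (b i)) ψ)) • b i
    letI L : S → S → CliffordAlgebra Q := fun φ ψ =>
      (2 : k)⁻¹ • ∑ p ∈ Finset.univ.filter (fun p : Fin (2 * n) × Fin (2 * n) => p.1 < p.2),
        (g (b p.1) (b p.1) * g (b p.2) (b p.2) *
          B φ (ρ (ι Q (b p.2) * ι Q (b p.1)) ψ)) • (ι Q (b p.1) * ι Q (b p.2))
    -- (i) `2[L̃₂(φ,ψ), v] = (−1)^{n(n−1)/2} ψ*∘φ(v) − φ*∘ψ(v)`
    (∀ (φ ψ : S) (v : V),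
      (2 : k) • (L φ ψ * ι Q v - ι Q v * L φ ψ) =
        ι Q ((-1 : k) ^ (n * (n - 1) / 2) • star ψ (ρ (ι Q v) φ)
          - star φ (ρ (ι Q v) ψ))) ∧
    -- (ii) `2 B(φ,ψ) v = (−1)^{n(n−1)/2} ψ*∘φ(v) + φ*∘ψ(v)`
    (∀ (φ ψ : S) (v : V),
      (2 * B φ ψ) • v =
        (-1 : k) ^ (n * (n - 1) / 2) • star ψ (ρ (ι Q v) φ)
          + star φ (ρ (ι Q v) ψ)) := by
  have hpolar : ∀ v w, QuadraticMap.polar Q v w = 2 * g v w := fun v w => by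
    simp only [QuadraticMap.polar, hQ, map_add, LinearMap.add_apply, hsymm w v]
    ring
  have hb : g.iIsOrtho b := fun i j hij => horth i j hij
  have hsq : ∀ i, g (b i) (b i) * g (b i) (b i) = 1 := fun i => by
    rcases hunit i with h | h <;> simp [h]
  refine ⟨fun φ ψ v => ?_, fun φ ψ v => ?_⟩
  · rw [smul_mul_assoc, mul_smul_comm, ← smul_sub, smul_smul, mul_inv_cancel₀ h2, one_smul,
      ← Ring.lie_def]
    refine (lie_sum_bivector_ι hpolar hb hsq (B φ ∘ₗ LinearMap.applyₗ ψ ∘ₗ ρ.toLinearMap) v).trans ?_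
    simp only [map_smul, map_sum, Finset.smul_sum, smul_smul, ← Finset.sum_sub_distrib,
      ← sub_smul, mul_left_comm _ (g _ _), ← mul_sub, sign_mul_sub_apply_ι_apply_ι hB hBsymm]
    rfl
  · calc (2 * B φ ψ) • v = ∑ i, ((2 * B φ ψ) * (g (b i) (b i) * g v (b i))) • b i := by
          have hv := hb.sum_smul_apply_basis hsq LinearMap.id v
          simp only [LinearMap.id_apply] at hv
          conv_lhs => rw [← hv]
          simp only [Finset.smul_sum, smul_smul]
      _ = _ := by
          simp only [Finset.smul_sum, smul_smul, ← Finset.sum_add_distrib, ← add_smul,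
            mul_left_comm _ (g _ _), ← mul_add, sign_mul_add_apply_ι_apply_ι hB hBsymm, hpolar]
          exact Finset.sum_congr rfl fun i _ => by ring

theorem stmt15 {k V S : Type*} [Field k] [AddCommGroup V] [Module k V]
    [FiniteDimensional k V] [AddCommGroup S] [Module k S] [FiniteDimensional k S]
    (n : ℕ)
    (g : LinearMap.BilinForm k V) (Q : QuadraticForm k V)
    (h2 : (2 : k) ≠ 0)
    (hsymm : ∀ v w, g v w = g w v)
    (hQ : ∀ v, Q v = g v v)
    -- an orthonormal basis of `V`
    (b : Module.Basis (Fin (2 * n)) k V)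
    (horth : ∀ i j, i ≠ j → g (b i) (b j) = 0)
    (hunit : ∀ i, g (b i) (b i) = 1 ∨ g (b i) (b i) = -1)
    -- the spinor representation
    (hdimS : Module.finrank k S = 2 ^ n)
    (ρ : CliffordAlgebra Q ≃ₐ[k] Module.End k S)
    -- a nonzero spinor norm with its symmetry
    (B : S →ₗ[k] S →ₗ[k] k) (hBne : B ≠ 0)
    (hB : ∀ (v : V) (φ ψ : S), B (ρ (ι Q v) φ) ψ = B φ (ρ (ι Q v) ψ))
    (hBsymm : ∀ φ ψ : S, B φ ψ = (-1 : k) ^ (n * (n - 1) / 2) * B ψ φ) :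
    letI star : S → S → V := fun φ ψ =>
      ∑ i, (g (b i) (b i) * B φ (ρ (ι Q (b i)) ψ)) • b i
    letI L : S → S → CliffordAlgebra Q := fun φ ψ =>
      (2 : k)⁻¹ • ∑ p ∈ Finset.univ.filter (fun p : Fin (2 * n) × Fin (2 * n) => p.1 < p.2),
        (g (b p.1) (b p.1) * g (b p.2) (b p.2) *
          B φ (ρ (ι Q (b p.2) * ι Q (b p.1)) ψ)) • (ι Q (b p.1) * ι Q (b p.2))
    -- (i) `2[L̃₂(φ,ψ), v] = (−1)^{n(n−1)/2} ψ*∘φ(v) − φ*∘ψ(v)`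
    (∀ (φ ψ : S) (v : V),
      (2 : k) • (L φ ψ * ι Q v - ι Q v * L φ ψ) =
        ι Q ((-1 : k) ^ (n * (n - 1) / 2) • star ψ (ρ (ι Q v) φ)
          - star φ (ρ (ι Q v) ψ))) ∧
    -- (ii) `2 B(φ,ψ) v = (−1)^{n(n−1)/2} ψ*∘φ(v) + φ*∘ψ(v)`
    (∀ (φ ψ : S) (v : V),
      (2 * B φ ψ) • v =
        (-1 : k) ^ (n * (n - 1) / 2) • star ψ (ρ (ι Q v) φ)
          + star φ (ρ (ι Q v) ψ)) :=
  stmt15_general n g Q h2 hsymm hQ b horth hunit ρ B hB hBsymm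
end

section
/- If I, J, K are subsets of {1,...,n} with I ∩ J ∩ K ≠ ∅ or I^c ∩ J^c ∩ K^c ≠ ∅, then L̃₂(e_I·v_I, e_J·v_I) · e_K·v_I = 0; and if I ∩ J ∩ K = ∅ and I^c ∩ J^c ∩ K^c = ∅, then L̃₂(e_I·v_I, e_J·v_I) · e_K·v_I is a scalar multiple of the basis pure spinor e_M·v_I where M = (I∩J) ∪ (J∩K) ∪ (K∩I). -/
open CliffordAlgebra

/-!
Write `ψ_X = e_X · v_I`. Each generator `e_a` or `i_a` maps the line `k ψ_X` into `k ψ_{X ∆ {a}}`,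
killing it when `a ∈ X`, resp. `a ∉ X`, and `B (ψ_X, ψ_Y) = 0` unless `Y = Xᶜ`. Every term of
`L̃₂(ψ_I, ψ_J) · ψ_K` has the form `B (x ψ_I, ψ_J) • y ψ_K`, where `x` and `y` shift supports by
the same set `D`, and `D ⊆ I ∆ K` unless the term vanishes. Such a term is zero unless
`J = (I ∆ D)ᶜ`; then every point lies in one or two of `I, J, K`, and those lying in two of them
form `K ∆ D`.
-/

open scoped symmDiff

theorem List.Perm.prod_map_eq_or_eq_neg_s17 {ι A : Type*} [Ring A] {f : ι → A}
    (hf : ∀ i j, f i * f j = -(f j * f i)) {l l' : List ι} (h : l.Perm l') :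
    (l'.map f).prod = (l.map f).prod ∨ (l'.map f).prod = -(l.map f).prod := by
  induction h with
  | nil => simp
  | cons x _ ih => rcases ih with ih | ih <;> simp [ih]
  | swap x y l => right; simp [← mul_assoc, hf x y]
  | trans _ _ ih₁ ih₂ => rcases ih₁ with h₁ | h₁ <;> rcases ih₂ with h₂ | h₂ <;> simp [h₁, h₂]

namespace Finset

variable {α : Type*} [DecidableEq α] {s : Finset α} {a : α}

theorem symmDiff_singleton_of_notMem (ha : a ∉ s) : s ∆ {a} = insert a s := by
  ext x; by_cases hx : x = a <;> simp [mem_symmDiff, hx, ha]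

theorem symmDiff_singleton_of_mem (ha : a ∈ s) : s ∆ {a} = s.erase a := by
  ext x; by_cases hx : x = a <;> simp [mem_symmDiff, hx, ha]

theorem mem_symmDiff_singleton_of_ne {b : α} (hab : a ≠ b) : a ∈ s ∆ {b} ↔ a ∈ s := by
  simp [mem_symmDiff, hab]

variable [Fintype α] {I J K D : Finset α}

theorem inter_inter_eq_empty_of_eq_compl_symmDiff (hJ : J = (I ∆ D)ᶜ) (hD : D ⊆ I ∆ K) :
    I ∩ J ∩ K = ∅ ∧ Iᶜ ∩ Jᶜ ∩ Kᶜ = ∅ := by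
  subst hJ
  constructor <;> ext x <;> have := @hD x <;>
    simp only [mem_symmDiff, mem_inter, mem_compl, notMem_empty, iff_false] at this ⊢ <;> tauto

theorem inter_union_inter_union_inter_of_eq_compl_symmDiff (hJ : J = (I ∆ D)ᶜ)
    (hD : D ⊆ I ∆ K) : I ∩ J ∪ J ∩ K ∪ K ∩ I = K ∆ D := by
  subst hJ
  ext x
  have := @hD x
  simp only [mem_symmDiff, mem_inter, mem_union, mem_compl] at this ⊢
  tauto

theorem eq_compl_insert_of_symmDiff_singleton_eq_compl {X Y : Finset α} (ha : a ∉ X)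
    (h : Y ∆ {a} = Xᶜ) : Y = (insert a X)ᶜ := by
  rw [← symmDiff_symmDiff_cancel_right {a} Y, h, symmDiff_singleton_of_mem (mem_compl.2 ha),
    compl_insert]

end Finset

section

variable {k V S : Type*} [Field k] [AddCommGroup V] [Module k V] [AddCommGroup S] [Module k S]
  {n : ℕ}

/-- Under these conditions `ι Q (eB a)` and `ι Q (iB a)` act as creation and annihilation
operators in `CliffordAlgebra Q`. -/
structure IsFockBasis (Q : QuadraticForm k V) (iB eB : Fin n → V) : Prop where
  apply_eB : ∀ a, Q (eB a) = 0
  polar_eB_eB : ∀ a b, QuadraticMap.polar Q (eB a) (eB b) = 0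
  polar_iB_eB : ∀ a b, QuadraticMap.polar Q (iB a) (eB b) = if a = b then 1 else 0

variable {Q : QuadraticForm k V} {iB eB : Fin n → V}

theorem IsFockBasis.of_bilinForm {g : LinearMap.BilinForm k V} (h2 : (2 : k) ≠ 0)
    (hsymm : ∀ v w, g v w = g w v) (hQ : ∀ v, Q v = g v v)
    (hee : ∀ a b, g (eB a) (eB b) = 0)
    (hei : ∀ a b, g (eB a) (iB b) = if a = b then (2 : k)⁻¹ else 0) :
    IsFockBasis Q iB eB := by
  have hpolar (v w : V) : QuadraticMap.polar Q v w = g v w + g w v := by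
    simp only [QuadraticMap.polar, hQ, map_add, LinearMap.add_apply]
    ring
  refine ⟨fun a => by rw [hQ, hee], fun a b => by rw [hpolar, hee, hee, add_zero], fun a b => ?_⟩
  rw [hpolar, hsymm, ← two_mul, hei, eq_comm]
  by_cases hab : a = b
  · rw [if_pos hab, if_pos hab.symm, mul_inv_cancel₀ h2]
  · rw [if_neg hab, if_neg (Ne.symm hab), mul_zero]

namespace IsFockBasis

variable (hF : IsFockBasis Q iB eB)
include hF

theorem ι_eB_mul_self (a : Fin n) : ι Q (eB a) * ι Q (eB a) = 0 := by
  rw [ι_sq_scalar, hF.apply_eB, map_zero]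

theorem ι_eB_mul_ι_eB (a b : Fin n) : ι Q (eB a) * ι Q (eB b) = -(ι Q (eB b) * ι Q (eB a)) :=
  eq_neg_of_add_eq_zero_left <| by rw [ι_mul_ι_add_swap, hF.polar_eB_eB, map_zero]

theorem ι_iB_mul_ι_eB_of_ne {a b : Fin n} (hab : a ≠ b) :
    ι Q (iB a) * ι Q (eB b) = -(ι Q (eB b) * ι Q (iB a)) :=
  eq_neg_of_add_eq_zero_left <| by rw [ι_mul_ι_add_swap, hF.polar_iB_eB, if_neg hab, map_zero]

theorem ι_iB_mul_ι_eB_self (a : Fin n) : ι Q (iB a) * ι Q (eB a) = 1 - ι Q (eB a) * ι Q (iB a) :=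
  eq_sub_of_add_eq <| by rw [ι_mul_ι_add_swap, hF.polar_iB_eB, if_pos rfl, map_one]

theorem prodE_insert {a : Fin n} {X : Finset (Fin n)} (ha : a ∉ X) :
    prodE Q eB (insert a X) = ι Q (eB a) * prodE Q eB X ∨
      prodE Q eB (insert a X) = -(ι Q (eB a) * prodE Q eB X) := by
  have hperm : (a :: X.sort (· ≤ ·)).Perm ((insert a X).sort (· ≤ ·)) :=
    List.perm_of_nodup_nodup_toFinset_eq (by simp [ha, X.sort_nodup]) ((insert a X).sort_nodup _)
      (by simp)
  simpa [prodE] using hperm.prod_map_eq_or_eq_neg_s17 hF.ι_eB_mul_ι_eB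

end IsFockBasis

variable {F : Type*} [FunLike F (CliffordAlgebra Q) (Module.End k S)]

def spinorLine (ρ : F) (eB : Fin n → V) (v0 : S) (X : Finset (Fin n)) : Submodule k S :=
  k ∙ ρ (prodE Q eB X) v0

theorem mem_spinorLine_self (ρ : F) (eB : Fin n → V) (v0 : S) (X : Finset (Fin n)) :
    ρ (prodE Q eB X) v0 ∈ spinorLine ρ eB v0 X :=
  Submodule.mem_span_singleton_self _

/-- Both conclusions of the theorem as one submodule, so that the terms of `L̃₂` can be treated
one at a time. -/
def tripleLine (ρ : F) (eB : Fin n → V) (v0 : S) (I J K : Finset (Fin n)) : Submodule k S :=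
  if I ∩ J ∩ K ≠ ∅ ∨ Iᶜ ∩ Jᶜ ∩ Kᶜ ≠ ∅ then ⊥ else spinorLine ρ eB v0 (I ∩ J ∪ J ∩ K ∪ K ∩ I)

theorem eq_zero_and_exists_eq_smul_of_mem_tripleLine {ρ : F} {v0 : S} {I J K : Finset (Fin n)}
    {w : S} (hw : w ∈ tripleLine ρ eB v0 I J K) :
    ((I ∩ J ∩ K ≠ ∅ ∨ Iᶜ ∩ Jᶜ ∩ Kᶜ ≠ ∅) → w = 0) ∧
      (I ∩ J ∩ K = ∅ → Iᶜ ∩ Jᶜ ∩ Kᶜ = ∅ →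
        ∃ c : k, w = c • ρ (prodE Q eB (I ∩ J ∪ J ∩ K ∪ K ∩ I)) v0) := by
  refine ⟨fun h => ?_, fun h₁ h₂ => ?_⟩
  · rwa [tripleLine, if_pos h, Submodule.mem_bot] at hw
  · rw [tripleLine, if_neg (by simp [h₁, h₂])] at hw
    obtain ⟨c, hc⟩ := Submodule.mem_span_singleton.1 hw
    exact ⟨c, hc.symm⟩

variable [AlgHomClass F k (CliffordAlgebra Q) (Module.End k S)] {ρ : F} {v0 : S}

theorem spinorLine_empty : spinorLine ρ eB v0 ∅ = k ∙ v0 := by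
  simp [spinorLine, prodE]

namespace IsFockBasis

variable (hF : IsFockBasis Q iB eB)
include hF

variable {a : Fin n} {X Y : Finset (Fin n)} {φ χ : S}

theorem spinorLine_insert (ha : a ∉ X) :
    spinorLine ρ eB v0 (insert a X) = (spinorLine ρ eB v0 X).map (ρ (ι Q (eB a))) := by
  simp only [spinorLine, Submodule.map_span, Set.image_singleton]
  rcases hF.prodE_insert ha with h | h <;> rw [h]
  · rw [map_mul, Module.End.mul_apply]
  · rw [map_neg, map_mul, LinearMap.neg_apply, Module.End.mul_apply, ← Set.neg_singleton,
      Submodule.span_neg]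

theorem eB_apply_eq_zero (hφ : φ ∈ spinorLine ρ eB v0 X) (ha : a ∈ X) :
    ρ (ι Q (eB a)) φ = 0 := by
  rw [← Finset.insert_erase ha, hF.spinorLine_insert (Finset.notMem_erase a X)] at hφ
  obtain ⟨φ', -, rfl⟩ := hφ
  rw [← Module.End.mul_apply, ← map_mul, hF.ι_eB_mul_self, map_zero, LinearMap.zero_apply]

theorem eB_apply_mem (a : Fin n) (hφ : φ ∈ spinorLine ρ eB v0 X) :
    ρ (ι Q (eB a)) φ ∈ spinorLine ρ eB v0 (X ∆ {a}) := by
  by_cases ha : a ∈ X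
  · rw [hF.eB_apply_eq_zero hφ ha]
    exact zero_mem _
  · rw [Finset.symmDiff_singleton_of_notMem ha, hF.spinorLine_insert ha]
    exact Submodule.mem_map_of_mem hφ

variable (hv0 : ∀ a, ρ (ι Q (iB a)) v0 = 0)
include hv0

theorem iB_apply_eq_zero (hφ : φ ∈ spinorLine ρ eB v0 X) (ha : a ∉ X) :
    ρ (ι Q (iB a)) φ = 0 := by
  induction X using Finset.induction_on generalizing φ with
  | empty =>
    rw [spinorLine_empty] at hφ
    obtain ⟨c, rfl⟩ := Submodule.mem_span_singleton.1 hφ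
    rw [map_smul, hv0, smul_zero]
  | insert b X hb ih =>
    rw [hF.spinorLine_insert hb] at hφ
    obtain ⟨φ', hφ', rfl⟩ := hφ
    rw [Finset.mem_insert, not_or] at ha
    rw [← Module.End.mul_apply, ← map_mul, hF.ι_iB_mul_ι_eB_of_ne ha.1, map_neg, map_mul,
      LinearMap.neg_apply, Module.End.mul_apply, ih hφ' ha.2, map_zero, neg_zero]

theorem iB_apply_eB_apply (hφ : φ ∈ spinorLine ρ eB v0 X) (ha : a ∉ X) :
    ρ (ι Q (iB a)) (ρ (ι Q (eB a)) φ) = φ := by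
  rw [← Module.End.mul_apply, ← map_mul, hF.ι_iB_mul_ι_eB_self, map_sub, map_one, map_mul,
    LinearMap.sub_apply, Module.End.one_apply, Module.End.mul_apply,
    hF.iB_apply_eq_zero hv0 hφ ha, map_zero, sub_zero]

theorem iB_apply_mem (a : Fin n) (hφ : φ ∈ spinorLine ρ eB v0 X) :
    ρ (ι Q (iB a)) φ ∈ spinorLine ρ eB v0 (X ∆ {a}) := by
  by_cases ha : a ∈ X
  · rw [← Finset.insert_erase ha, hF.spinorLine_insert (Finset.notMem_erase a X)] at hφ
    obtain ⟨φ', hφ', rfl⟩ := hφ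
    rwa [hF.iB_apply_eB_apply hv0 hφ' (Finset.notMem_erase a X),
      Finset.symmDiff_singleton_of_mem ha]
  · rw [hF.iB_apply_eq_zero hv0 hφ ha]
    exact zero_mem _

variable {B : S →ₗ[k] S →ₗ[k] k}
  (hB : ∀ (v : V) (φ ψ : S), B (ρ (ι Q v) φ) ψ = B φ (ρ (ι Q v) ψ))
include hB

theorem bilin_eq_zero_of_ne_compl (hφ : φ ∈ spinorLine ρ eB v0 X)
    (hχ : χ ∈ spinorLine ρ eB v0 Y) (hY : Y ≠ Xᶜ) : B φ χ = 0 := by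
  induction X using Finset.induction_on generalizing φ χ Y with
  | empty =>
    obtain ⟨a, ha⟩ : ∃ a, a ∉ Y := by simpa [Finset.eq_univ_iff_forall] using hY
    rw [← hF.iB_apply_eB_apply hv0 hχ ha, ← hB,
      hF.iB_apply_eq_zero hv0 hφ (Finset.notMem_empty a), map_zero, LinearMap.zero_apply]
  | insert a X ha ih =>
    rw [hF.spinorLine_insert ha] at hφ
    obtain ⟨φ', hφ', rfl⟩ := hφ
    rw [hB]
    exact ih hφ' (hF.eB_apply_mem a hχ) fun h =>
      hY (Finset.eq_compl_insert_of_symmDiff_singleton_eq_compl ha h)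

theorem smul_mem_tripleLine {I J K D : Finset (Fin n)} (hφ : φ ∈ spinorLine ρ eB v0 (I ∆ D))
    (hχ : χ ∈ spinorLine ρ eB v0 (K ∆ D)) (hD : D ⊆ I ∆ K) :
    B φ (ρ (prodE Q eB J) v0) • χ ∈ tripleLine ρ eB v0 I J K := by
  by_cases hJ : J = (I ∆ D)ᶜ
  · obtain ⟨h₁, h₂⟩ := Finset.inter_inter_eq_empty_of_eq_compl_symmDiff hJ hD
    rw [tripleLine, if_neg (by simp [h₁, h₂]),
      Finset.inter_union_inter_union_inter_of_eq_compl_symmDiff hJ hD]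
    exact Submodule.smul_mem _ _ hχ
  · rw [hF.bilin_eq_zero_of_ne_compl hv0 hB hφ (mem_spinorLine_self ρ eB v0 J) hJ, zero_smul]
    exact zero_mem _

variable {p q : Fin n} (I J K : Finset (Fin n))

theorem smul_eB_eB_mem_tripleLine (hpq : p ≠ q) :
    B (ρ (ι Q (eB p) * ι Q (eB q)) (ρ (prodE Q eB I) v0)) (ρ (prodE Q eB J) v0) •
      ρ (ι Q (iB p) * ι Q (iB q)) (ρ (prodE Q eB K) v0) ∈ tripleLine ρ eB v0 I J K := by
  have hI := mem_spinorLine_self ρ eB v0 I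
  have hK := mem_spinorLine_self ρ eB v0 K
  simp only [map_mul, Module.End.mul_apply]
  by_cases hqI : q ∈ I
  · simp [hF.eB_apply_eq_zero hI hqI]
  by_cases hpI : p ∈ I
  · simp [hF.eB_apply_eq_zero (hF.eB_apply_mem q hI)
      ((Finset.mem_symmDiff_singleton_of_ne hpq).2 hpI)]
  by_cases hqK : q ∉ K
  · simp [hF.iB_apply_eq_zero hv0 hK hqK]
  by_cases hpK : p ∉ K
  · simp [hF.iB_apply_eq_zero hv0 (hF.iB_apply_mem hv0 q hK)
      (mt (Finset.mem_symmDiff_singleton_of_ne hpq).1 hpK)]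
  refine hF.smul_mem_tripleLine hv0 hB (D := {q} ∆ {p}) ?_ ?_ ?_
  · rw [← symmDiff_assoc]; exact hF.eB_apply_mem p (hF.eB_apply_mem q hI)
  · rw [← symmDiff_assoc]; exact hF.iB_apply_mem hv0 p (hF.iB_apply_mem hv0 q hK)
  · intro x; simp only [Finset.mem_symmDiff, Finset.mem_singleton]; grind

theorem smul_iB_iB_mem_tripleLine (hpq : p ≠ q) :
    B (ρ (ι Q (iB p) * ι Q (iB q)) (ρ (prodE Q eB I) v0)) (ρ (prodE Q eB J) v0) •
      ρ (ι Q (eB p) * ι Q (eB q)) (ρ (prodE Q eB K) v0) ∈ tripleLine ρ eB v0 I J K := by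
  have hI := mem_spinorLine_self ρ eB v0 I
  have hK := mem_spinorLine_self ρ eB v0 K
  simp only [map_mul, Module.End.mul_apply]
  by_cases hqI : q ∉ I
  · simp [hF.iB_apply_eq_zero hv0 hI hqI]
  by_cases hpI : p ∉ I
  · simp [hF.iB_apply_eq_zero hv0 (hF.iB_apply_mem hv0 q hI)
      (mt (Finset.mem_symmDiff_singleton_of_ne hpq).1 hpI)]
  by_cases hqK : q ∈ K
  · simp [hF.eB_apply_eq_zero hK hqK]
  by_cases hpK : p ∈ K
  · simp [hF.eB_apply_eq_zero (hF.eB_apply_mem q hK)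
      ((Finset.mem_symmDiff_singleton_of_ne hpq).2 hpK)]
  refine hF.smul_mem_tripleLine hv0 hB (D := {q} ∆ {p}) ?_ ?_ ?_
  · rw [← symmDiff_assoc]; exact hF.iB_apply_mem hv0 p (hF.iB_apply_mem hv0 q hI)
  · rw [← symmDiff_assoc]; exact hF.eB_apply_mem p (hF.eB_apply_mem q hK)
  · intro x; simp only [Finset.mem_symmDiff, Finset.mem_singleton]; grind

theorem smul_eB_iB_mem_tripleLine (hpq : p ≠ q) :
    B (ρ (ι Q (eB p) * ι Q (iB q)) (ρ (prodE Q eB I) v0)) (ρ (prodE Q eB J) v0) •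
      ρ (ι Q (iB p) * ι Q (eB q) - ι Q (eB q) * ι Q (iB p)) (ρ (prodE Q eB K) v0) ∈
      tripleLine ρ eB v0 I J K := by
  have hI := mem_spinorLine_self ρ eB v0 I
  have hK := mem_spinorLine_self ρ eB v0 K
  simp only [map_mul, map_sub, LinearMap.sub_apply, Module.End.mul_apply]
  by_cases hqI : q ∉ I
  · simp [hF.iB_apply_eq_zero hv0 hI hqI]
  by_cases hpI : p ∈ I
  · simp [hF.eB_apply_eq_zero (hF.iB_apply_mem hv0 q hI)
      ((Finset.mem_symmDiff_singleton_of_ne hpq).2 hpI)]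
  by_cases hqK : q ∈ K
  · simp [hF.eB_apply_eq_zero hK hqK, hF.eB_apply_eq_zero (hF.iB_apply_mem hv0 p hK)
      ((Finset.mem_symmDiff_singleton_of_ne hpq.symm).2 hqK)]
  by_cases hpK : p ∉ K
  · simp [hF.iB_apply_eq_zero hv0 hK hpK, hF.iB_apply_eq_zero hv0 (hF.eB_apply_mem q hK)
      (mt (Finset.mem_symmDiff_singleton_of_ne hpq).1 hpK)]
  refine hF.smul_mem_tripleLine hv0 hB (D := {q} ∆ {p}) ?_ ?_ ?_
  · rw [← symmDiff_assoc]; exact hF.eB_apply_mem p (hF.iB_apply_mem hv0 q hI)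
  · rw [← symmDiff_assoc]
    refine sub_mem (hF.iB_apply_mem hv0 p (hF.eB_apply_mem q hK)) ?_
    rw [symmDiff_right_comm]
    exact hF.eB_apply_mem q (hF.iB_apply_mem hv0 p hK)
  · intro x; simp only [Finset.mem_symmDiff, Finset.mem_singleton]; grind

theorem smul_diag_mem_tripleLine (a : Fin n) :
    B (ρ (ι Q (eB a) * ι Q (iB a) - ι Q (iB a) * ι Q (eB a)) (ρ (prodE Q eB I) v0))
        (ρ (prodE Q eB J) v0) •
      ρ (ι Q (iB a) * ι Q (eB a) - ι Q (eB a) * ι Q (iB a)) (ρ (prodE Q eB K) v0) ∈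
      tripleLine ρ eB v0 I J K := by
  have hI := mem_spinorLine_self ρ eB v0 I
  have hK := mem_spinorLine_self ρ eB v0 K
  refine hF.smul_mem_tripleLine hv0 hB (D := {a} ∆ {a}) ?_ ?_ (by simp) <;>
    simp only [map_mul, map_sub, LinearMap.sub_apply, Module.End.mul_apply]
  · rw [← symmDiff_assoc]
    exact sub_mem (hF.eB_apply_mem a (hF.iB_apply_mem hv0 a hI))
      (hF.iB_apply_mem hv0 a (hF.eB_apply_mem a hI))
  · rw [← symmDiff_assoc]
    exact sub_mem (hF.iB_apply_mem hv0 a (hF.eB_apply_mem a hK))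
      (hF.eB_apply_mem a (hF.iB_apply_mem hv0 a hK))

end IsFockBasis

end

theorem stmt17_general {k V S : Type*} [Field k] [AddCommGroup V] [Module k V]
    [AddCommGroup S] [Module k S]
    (n : ℕ)
    (g : LinearMap.BilinForm k V) (Q : QuadraticForm k V)
    (h2 : (2 : k) ≠ 0)
    (hsymm : ∀ v w, g v w = g w v)
    (hQ : ∀ v, Q v = g v v)
    -- a polarisation with dual bases
    (iB eB : Fin n → V)
    (hee : ∀ a b, g (eB a) (eB b) = 0)
    (hei : ∀ a b, g (eB a) (iB b) = if a = b then (2 : k)⁻¹ else 0)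
    -- the spinor representation
    (ρ : CliffordAlgebra Q ≃ₐ[k] Module.End k S)
    -- a pure spinor annihilated by `I`
    (v0 : S)
    (hv0 : ∀ a, ρ (ι Q (iB a)) v0 = 0)
    -- a nonzero spinor norm
    (B : S →ₗ[k] S →ₗ[k] k)
    (hB : ∀ (v : V) (φ ψ : S), B (ρ (ι Q v) φ) ψ = B φ (ρ (ι Q v) ψ)) :
    -- the operator `L̃₂` in isotropic coordinates
    letI L : S → S → CliffordAlgebra Q := fun ψ1 ψ2 =>
      (∑ p ∈ Finset.univ.filter (fun p : Fin n × Fin n => p.1 ≠ p.2),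
        (B (ρ (ι Q (eB p.1) * ι Q (eB p.2)) ψ1) ψ2) • (ι Q (iB p.1) * ι Q (iB p.2)))
      + (∑ p ∈ Finset.univ.filter (fun p : Fin n × Fin n => p.1 ≠ p.2),
        (B (ρ (ι Q (iB p.1) * ι Q (iB p.2)) ψ1) ψ2) • (ι Q (eB p.1) * ι Q (eB p.2)))
      + (∑ p ∈ Finset.univ.filter (fun p : Fin n × Fin n => p.1 ≠ p.2),
        (B (ρ (ι Q (eB p.1) * ι Q (iB p.2)) ψ1) ψ2) •
          (ι Q (iB p.1) * ι Q (eB p.2) - ι Q (eB p.2) * ι Q (iB p.1)))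
      + (2 : k)⁻¹ • ∑ a : Fin n,
        (B (ρ (ι Q (eB a) * ι Q (iB a) - ι Q (iB a) * ι Q (eB a)) ψ1) ψ2) •
          (ι Q (iB a) * ι Q (eB a) - ι Q (eB a) * ι Q (iB a))
    ∀ I J K : Finset (Fin n), Disjoint I J → K = (I ∪ J)ᶜ →
    ∀ I J K : Finset (Fin n),
      ((I ∩ J ∩ K ≠ ∅ ∨ Iᶜ ∩ Jᶜ ∩ Kᶜ ≠ ∅) →
        ρ (L (ρ (prodE Q eB I) v0) (ρ (prodE Q eB J) v0)) (ρ (prodE Q eB K) v0) = 0) ∧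
      (I ∩ J ∩ K = ∅ → Iᶜ ∩ Jᶜ ∩ Kᶜ = ∅ →
        ∃ c : k,
          ρ (L (ρ (prodE Q eB I) v0) (ρ (prodE Q eB J) v0)) (ρ (prodE Q eB K) v0) =
            c • ρ (prodE Q eB ((I ∩ J) ∪ (J ∩ K) ∪ (K ∩ I))) v0) := by
  intro _ _ _ _ _ I J K
  have hF : IsFockBasis Q iB eB := .of_bilinForm h2 hsymm hQ hee hei
  apply eq_zero_and_exists_eq_smul_of_mem_tripleLine
  simp only [map_add, map_smul, map_sum, LinearMap.add_apply, LinearMap.smul_apply,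
    LinearMap.sum_apply]
  refine add_mem (add_mem (add_mem ?_ ?_) ?_) (Submodule.smul_mem _ _ ?_) <;>
    refine sum_mem fun p hp => ?_
  · exact hF.smul_eB_eB_mem_tripleLine hv0 hB I J K (Finset.mem_filter.1 hp).2
  · exact hF.smul_iB_iB_mem_tripleLine hv0 hB I J K (Finset.mem_filter.1 hp).2
  · exact hF.smul_eB_iB_mem_tripleLine hv0 hB I J K (Finset.mem_filter.1 hp).2
  · exact hF.smul_diag_mem_tripleLine hv0 hB I J K p

theorem stmt17 {k V S : Type*} [Field k] [AddCommGroup V] [Module k V]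
    [FiniteDimensional k V] [AddCommGroup S] [Module k S] [FiniteDimensional k S]
    (n : ℕ)
    (g : LinearMap.BilinForm k V) (Q : QuadraticForm k V)
    (h2 : (2 : k) ≠ 0)
    (hsymm : ∀ v w, g v w = g w v)
    (hdimV : Module.finrank k V = 2 * n)
    (hQ : ∀ v, Q v = g v v)
    -- a polarisation with dual bases
    (iB eB : Fin n → V)
    (hii : ∀ a b, g (iB a) (iB b) = 0)
    (hee : ∀ a b, g (eB a) (eB b) = 0)
    (hei : ∀ a b, g (eB a) (iB b) = if a = b then (2 : k)⁻¹ else 0)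
    (hspan : Submodule.span k (Set.range iB ∪ Set.range eB) = ⊤)
    -- the spinor representation
    (hdimS : Module.finrank k S = 2 ^ n)
    (ρ : CliffordAlgebra Q ≃ₐ[k] Module.End k S)
    -- a pure spinor annihilated by `I`
    (v0 : S) (hv0ne : v0 ≠ 0)
    (hv0 : ∀ a, ρ (ι Q (iB a)) v0 = 0)
    -- a nonzero spinor norm
    (B : S →ₗ[k] S →ₗ[k] k) (hBne : B ≠ 0)
    (hB : ∀ (v : V) (φ ψ : S), B (ρ (ι Q v) φ) ψ = B φ (ρ (ι Q v) ψ)) :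
    -- the operator `L̃₂` in isotropic coordinates
    letI L : S → S → CliffordAlgebra Q := fun ψ1 ψ2 =>
      (∑ p ∈ Finset.univ.filter (fun p : Fin n × Fin n => p.1 ≠ p.2),
        (B (ρ (ι Q (eB p.1) * ι Q (eB p.2)) ψ1) ψ2) • (ι Q (iB p.1) * ι Q (iB p.2)))
      + (∑ p ∈ Finset.univ.filter (fun p : Fin n × Fin n => p.1 ≠ p.2),
        (B (ρ (ι Q (iB p.1) * ι Q (iB p.2)) ψ1) ψ2) • (ι Q (eB p.1) * ι Q (eB p.2)))
      + (∑ p ∈ Finset.univ.filter (fun p : Fin n × Fin n => p.1 ≠ p.2),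
        (B (ρ (ι Q (eB p.1) * ι Q (iB p.2)) ψ1) ψ2) •
          (ι Q (iB p.1) * ι Q (eB p.2) - ι Q (eB p.2) * ι Q (iB p.1)))
      + (2 : k)⁻¹ • ∑ a : Fin n,
        (B (ρ (ι Q (eB a) * ι Q (iB a) - ι Q (iB a) * ι Q (eB a)) ψ1) ψ2) •
          (ι Q (iB a) * ι Q (eB a) - ι Q (eB a) * ι Q (iB a))
    ∀ I J K : Finset (Fin n), Disjoint I J → K = (I ∪ J)ᶜ →
    ∀ I J K : Finset (Fin n),
      ((I ∩ J ∩ K ≠ ∅ ∨ Iᶜ ∩ Jᶜ ∩ Kᶜ ≠ ∅) →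
        ρ (L (ρ (prodE Q eB I) v0) (ρ (prodE Q eB J) v0)) (ρ (prodE Q eB K) v0) = 0) ∧
      (I ∩ J ∩ K = ∅ → Iᶜ ∩ Jᶜ ∩ Kᶜ = ∅ →
        ∃ c : k,
          ρ (L (ρ (prodE Q eB I) v0) (ρ (prodE Q eB J) v0)) (ρ (prodE Q eB K) v0) =
            c • ρ (prodE Q eB ((I ∩ J) ∪ (J ∩ K) ∪ (K ∩ I))) v0) :=
  stmt17_general n g Q h2 hsymm hQ iB eB hee hei ρ v0 hv0 B hB
end

section
/- Let E = g ⊕ W be a vector space with an (alternating, bilinear) bracket such that: g is a simple Lie subalgebra, the bracket of g with W makes W a nontrivial irreducible g-representation, dim g > dim W, [W,W] = g, and the Jacobi identity holds (so E is a Lie algebra). Then E is a simple Lie algebra. -/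
/-! The ideal `I ∩ g` of the simple algebra `g` is `0` or `g`. If it is `g`, then `I ∩ W` contains
`[g, W] ≠ 0`, so irreducibility gives `W ⊆ I` and `I = E`. If it is `0`, then `I` embeds in
`E / g ≅ W`, so `dim I ≤ dim W < dim g`; hence the projection of `I` to `g`, again an ideal of `g`,
is `0`, i.e. `I ⊆ W`. Being a `g`-submodule of `W`, `I` is `0` or `W`, and `I = W` is impossible
since then `g = [W, W] ⊆ I = W`. -/

open Module

namespace Submodule

variable {k V : Type*} [Field k] [AddCommGroup V] [Module k V] [FiniteDimensional k V]

theorem finrank_le_of_disjoint_of_isCompl {p q r : Submodule k V} (hpq : IsCompl p q)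
    (hrp : Disjoint r p) : finrank k r ≤ finrank k q := by
  have := finrank_sup_add_finrank_inf_eq r p
  have := (r ⊔ p).finrank_le
  have := finrank_add_eq_of_isCompl hpq
  rw [hrp.eq_bot, finrank_bot] at *
  omega

theorem finrank_le_of_codisjoint_of_isCompl {p q r : Submodule k V} (hpq : IsCompl p q)
    (hrq : Codisjoint r q) : finrank k p ≤ finrank k r := by
  have := finrank_add_le_finrank_add_finrank r q
  have := finrank_add_eq_of_isCompl hpq
  rw [hrq.eq_top, finrank_top] at *
  omega

end Submodule

namespace LieSubalgebra

variable {k E : Type*} [Field k] [LieRing E] [LieAlgebra k E]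

theorem eq_bot_or_eq_of_lie_mem (g : LieSubalgebra k E) [LieAlgebra.IsSimple k g]
    {J : Submodule k E} (hJg : J ≤ g.toSubmodule) (hJ : ∀ x ∈ g, ∀ a ∈ J, ⁅x, a⁆ ∈ J) :
    J = ⊥ ∨ J = g.toSubmodule := by
  let J' : LieIdeal k g :=
    { J.comap g.toSubmodule.subtype with
      lie_mem := fun {x _} ha => hJ x x.2 _ ha }
  have hJ' : J = J'.toSubmodule.map g.toSubmodule.subtype := by
    rw [← inf_eq_right.mpr hJg]
    exact (Submodule.map_comap_subtype _ _).symm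
  rcases LieAlgebra.IsSimple.eq_bot_or_eq_top J' with h | h
  · left; rw [hJ', h]; simp
  · right; rw [hJ', h]; simp

end LieSubalgebra

namespace LieIdeal

variable {k E : Type*} [Field k] [LieRing E] [LieAlgebra k E]
  {g : LieSubalgebra k E} {W : Submodule k E} (I : LieIdeal k E)

theorem eq_top_of_subalgebra_le (hcompl : IsCompl g.toSubmodule W)
    (hWmod : ∀ x ∈ g, ∀ w ∈ W, ⁅x, w⁆ ∈ W)
    (hirred : ∀ U : Submodule k E, U ≤ W →
      (∀ x ∈ g, ∀ u ∈ U, ⁅x, u⁆ ∈ U) → U = ⊥ ∨ U = W)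
    (hnontriv : ∃ x ∈ g, ∃ w ∈ W, ⁅x, w⁆ ≠ 0) (hgI : g.toSubmodule ≤ I.toSubmodule) :
    I = ⊤ := by
  obtain ⟨x, hx, w, hw, hxw⟩ := hnontriv
  have hne : I.toSubmodule ⊓ W ≠ ⊥ :=
    (Submodule.ne_bot_iff _).mpr ⟨_, ⟨lie_mem_left k E I _ _ (hgI hx), hWmod x hx w hw⟩, hxw⟩
  have hWI : I.toSubmodule ⊓ W = W :=
    (hirred _ inf_le_right fun y hy u hu => ⟨I.lie_mem hu.1, hWmod y hy u hu.2⟩).resolve_left hne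
  rw [← LieSubmodule.toSubmodule_eq_top, eq_top_iff, ← hcompl.sup_eq_top]
  exact sup_le hgI (inf_eq_right.mp hWI)

theorem le_of_disjoint_subalgebra [Module.Finite k E] [LieAlgebra.IsSimple k g]
    (hcompl : IsCompl g.toSubmodule W) (hWmod : ∀ x ∈ g, ∀ w ∈ W, ⁅x, w⁆ ∈ W)
    (hdim : finrank k W < finrank k g.toSubmodule) (hIg : Disjoint I.toSubmodule g.toSubmodule) :
    I.toSubmodule ≤ W := by
  -- `g ⊓ (I ⊔ W)` is the projection of `I` to `g` along `W`.
  have hJ : ∀ x ∈ g, ∀ a ∈ g.toSubmodule ⊓ (I.toSubmodule ⊔ W),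
      ⁅x, a⁆ ∈ g.toSubmodule ⊓ (I.toSubmodule ⊔ W) := by
    rintro x hx a ⟨hag, haIW⟩
    refine ⟨g.lie_mem hx hag, ?_⟩
    obtain ⟨i, hi, w, hw, rfl⟩ := Submodule.mem_sup.mp haIW
    rw [lie_add]
    exact Submodule.add_mem_sup (I.lie_mem hi) (hWmod x hx w hw)
  rcases g.eq_bot_or_eq_of_lie_mem inf_le_left hJ with h | h
  · calc I.toSubmodule ≤ I.toSubmodule ⊔ W := le_sup_left
      _ = (W ⊔ g.toSubmodule) ⊓ (I.toSubmodule ⊔ W) := by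
        rw [hcompl.symm.sup_eq_top, top_inf_eq]
      _ = W := by rw [sup_inf_assoc_of_le _ le_sup_right, h, sup_bot_eq]
  · have hIW : Codisjoint I.toSubmodule W := by
      rw [codisjoint_iff, eq_top_iff, ← hcompl.sup_eq_top]
      exact sup_le (inf_eq_left.mp h) le_sup_right
    have := Submodule.finrank_le_of_codisjoint_of_isCompl hcompl hIW
    have := Submodule.finrank_le_of_disjoint_of_isCompl hcompl hIg
    omega

theorem eq_bot_of_le_complement [LieAlgebra.IsSimple k g] (hcompl : IsCompl g.toSubmodule W)
    (hirred : ∀ U : Submodule k E, U ≤ W →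
      (∀ x ∈ g, ∀ u ∈ U, ⁅x, u⁆ ∈ U) → U = ⊥ ∨ U = W)
    (hWW : Submodule.span k {z : E | ∃ u ∈ W, ∃ v ∈ W, z = ⁅u, v⁆} = g.toSubmodule)
    (hIW : I.toSubmodule ≤ W) : I = ⊥ := by
  rw [← LieSubmodule.toSubmodule_eq_bot]
  refine (hirred _ hIW fun x _ u hu => I.lie_mem hu).resolve_right fun hI => ?_
  have hgW : g.toSubmodule ≤ W := by
    rw [← hWW, Submodule.span_le, ← hI]
    rintro _ ⟨u, hu, v, -, rfl⟩
    exact lie_mem_left k E I u v hu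
  have := LieAlgebra.IsSimple.nontrivial k (L := g)
  exact Submodule.nontrivial_iff_ne_bot.mp this (hcompl.disjoint.eq_bot_of_le hgW)

end LieIdeal

theorem stmt19 {k E : Type*} [Field k] [LieRing E] [LieAlgebra k E]
    [Module.Finite k E]
    -- a subalgebra `g` of `E`, simple as a Lie algebra
    (gS : LieSubalgebra k E)
    (hgsimple : LieAlgebra.IsSimple k ↥gS)
    -- a complementary `g`-submodule `W`
    (W : Submodule k E)
    (hcompl : IsCompl gS.toSubmodule W)
    (hWmod : ∀ x ∈ gS, ∀ w ∈ W, ⁅x, w⁆ ∈ W)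
    -- `W` is an irreducible `g`-representation
    (hirred : ∀ U : Submodule k E, U ≤ W →
      (∀ x ∈ gS, ∀ u ∈ U, ⁅x, u⁆ ∈ U) → U = ⊥ ∨ U = W)
    -- on which `g` acts nontrivially
    (hnontriv : ∃ x ∈ gS, ∃ w ∈ W, ⁅x, w⁆ ≠ 0)
    -- `[W, W] = g`
    (hWW : Submodule.span k {z : E | ∃ u ∈ W, ∃ v ∈ W, z = ⁅u, v⁆} =
      gS.toSubmodule)
    -- `dim g > dim W`
    (hdim : Module.finrank k ↥W < Module.finrank k ↥gS.toSubmodule) :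
    ∀ I : LieIdeal k E, I = ⊥ ∨ I = ⊤ := by
  intro I
  rcases gS.eq_bot_or_eq_of_lie_mem (J := gS.toSubmodule ⊓ I.toSubmodule) inf_le_left
      fun x hx a ha => ⟨gS.lie_mem hx ha.1, I.lie_mem ha.2⟩ with h | h
  · exact .inl <| I.eq_bot_of_le_complement hcompl hirred hWW <|
      I.le_of_disjoint_subalgebra hcompl hWmod hdim (disjoint_iff.mpr h).symm
  · exact .inr <| I.eq_top_of_subalgebra_le hcompl hWmod hirred hnontriv (inf_eq_left.mp h)
end
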